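/- arXiv:0903.0328 — 7 statements merged into one kernel-verified Lean document; each statement's English description precedes it below -/
import Mathlib

section
/- A finite simple graph G on at least 2 vertices is pairwise regular (i.e., there is a constant t with d(x)+d(y)-d(x,y) = t for all pairs of distinct vertices x, y, where d(x,y) is 1 if xy is an edge and 0 otherwise) and is neither complete nor empty, if and only if G is isomorphic to K_{1,2} (the path on 3 vertices) or its complement (an edge plus an isolated vertex). -/
/-- The path on 3 vertices, `K_{1,2}`. -/
def K12 : SimpleGraph (Fin 3) :=
  SimpleGraph.fromEdgeSet {s(0, 1), s(1, 2)}

/-- A graph is pairwise regular if `d(x) + d(y) - d(x,y)` is constant over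
distinct pairs of vertices. -/
def PairwiseRegular {V : Type*} [Fintype V] (G : SimpleGraph V) [DecidableRel G.Adj] : Prop :=
  ∃ t : ℤ, ∀ x y : V, x ≠ y →
    (G.degree x : ℤ) + (G.degree y : ℤ) - (if G.Adj x y then 1 else 0) = t

lemma fin3_cases (i : Fin 3) : i = 0 ∨ i = 1 ∨ i = 2 := by fin_cases i <;> simp

lemma K12_adj (a b : Fin 3) : K12.Adj a b ↔
    (a = 0 ∧ b = 1) ∨ (a = 1 ∧ b = 0) ∨ (a = 1 ∧ b = 2) ∨ (a = 2 ∧ b = 1) := by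
  simp only [K12, SimpleGraph.fromEdgeSet_adj, Set.mem_insert_iff, Set.mem_singleton_iff,
    Sym2.eq_iff]
  constructor
  · rintro ⟨h, hne⟩; tauto
  · rintro (⟨rfl, rfl⟩ | ⟨rfl, rfl⟩ | ⟨rfl, rfl⟩ | ⟨rfl, rfl⟩) <;> exact ⟨by tauto, by decide⟩

lemma K12c_adj (a b : Fin 3) : K12ᶜ.Adj a b ↔ (a = 0 ∧ b = 2) ∨ (a = 2 ∧ b = 0) := by
  fin_cases a <;> fin_cases b <;> simp [SimpleGraph.compl_adj, K12_adj]

lemma degree_eq_sum {V : Type*} [Fintype V] [DecidableEq V] (G : SimpleGraph V)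
    [DecidableRel G.Adj] (x : V) :
    (G.degree x : ℤ) = ∑ z, (if G.Adj x z then (1:ℤ) else 0) := by
  rw [SimpleGraph.degree, SimpleGraph.neighborFinset_eq_filter, Finset.card_filter]
  push_cast
  rfl

def equiv3 {V : Type*} [DecidableEq V] {v0 v1 v2 : V} (h01 : v0 ≠ v1) (h02 : v0 ≠ v2)
    (h12 : v1 ≠ v2) (cover : ∀ x : V, x = v0 ∨ x = v1 ∨ x = v2) : V ≃ Fin 3 where
  toFun x := if x = v0 then 0 else if x = v1 then 1 else 2
  invFun := ![v0, v1, v2]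
  left_inv x := by
    rcases cover x with rfl | rfl | rfl <;>
      simp [h01, h02, h12, h01.symm, h02.symm, h12.symm]
  right_inv i := by
    fin_cases i <;> simp [h01, h02, h12, h01.symm, h02.symm, h12.symm]

lemma build_K12 {V : Type*} [DecidableEq V] (G : SimpleGraph V) {v0 v1 v2 : V}
    (h01 : v0 ≠ v1) (h02 : v0 ≠ v2) (h12 : v1 ≠ v2)
    (cover : ∀ x : V, x = v0 ∨ x = v1 ∨ x = v2)
    (a01 : G.Adj v0 v1) (a12 : G.Adj v1 v2) (na02 : ¬ G.Adj v0 v2) :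
    Nonempty (G ≃g K12) := by
  have a10 := a01.symm
  have a21 := a12.symm
  have na20 : ¬ G.Adj v2 v0 := fun h => na02 h.symm
  have hIr : ∀ v, ¬ G.Adj v v := fun v => G.irrefl
  refine ⟨⟨equiv3 h01 h02 h12 cover, @fun a b => ?_⟩⟩
  rcases cover a with rfl | rfl | rfl <;> rcases cover b with rfl | rfl | rfl <;>
    simp [equiv3, h01, h02, h12, h01.symm, h02.symm, h12.symm, K12_adj,
      a01, a12, a10, a21, na02, na20, hIr]

lemma build_K12c {V : Type*} [DecidableEq V] (G : SimpleGraph V) {v0 v1 v2 : V}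
    (h01 : v0 ≠ v1) (h02 : v0 ≠ v2) (h12 : v1 ≠ v2)
    (cover : ∀ x : V, x = v0 ∨ x = v1 ∨ x = v2)
    (a01 : G.Adj v0 v1) (na02 : ¬ G.Adj v0 v2) (na12 : ¬ G.Adj v1 v2) :
    Nonempty (G ≃g K12ᶜ) := by
  have a10 := a01.symm
  have na20 : ¬ G.Adj v2 v0 := fun h => na02 h.symm
  have na21 : ¬ G.Adj v2 v1 := fun h => na12 h.symm
  have hIr : ∀ v, ¬ G.Adj v v := fun v => G.irrefl
  have cover' : ∀ x : V, x = v0 ∨ x = v2 ∨ x = v1 := fun x => by rcases cover x with h|h|h <;> tauto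
  refine ⟨⟨equiv3 h02 h01 h12.symm cover', @fun a b => ?_⟩⟩
  rcases cover a with rfl | rfl | rfl <;> rcases cover b with rfl | rfl | rfl <;>
    simp [equiv3, h01, h02, h12, h01.symm, h02.symm, h12.symm, K12c_adj, K12_adj,
      a01, a10, na02, na20, na12, na21, hIr]

lemma card_eq_three {V : Type*} [Fintype V] [DecidableEq V]
    (hV : 2 ≤ Fintype.card V) (G : SimpleGraph V) [DecidableRel G.Adj]
    (hPR : PairwiseRegular G) (hT : G ≠ ⊤) (hB : G ≠ ⊥) :
    Fintype.card V = 3 := by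
  obtain ⟨t, ht⟩ := hPR
  by_contra hn3
  -- all degrees are equal
  have hdeg : ∀ x y : V, (G.degree x : ℤ) = G.degree y := by
    intro x y
    by_cases hxy : x = y
    · rw [hxy]
    have hsum : (G.degree x : ℤ) - G.degree y
        = ∑ z, ((if G.Adj x z then (1:ℤ) else 0) - (if G.Adj y z then 1 else 0)) := by
      rw [Finset.sum_sub_distrib, ← degree_eq_sum, ← degree_eq_sum]
    rw [← Finset.sum_sdiff (Finset.subset_univ ({x, y} : Finset V))] at hsum
    have h2 : ∑ z ∈ ({x, y} : Finset V),
        ((if G.Adj x z then (1:ℤ) else 0) - (if G.Adj y z then 1 else 0)) = 0 := by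
      rw [Finset.sum_pair hxy]
      have c1 : (if G.Adj y x then (1:ℤ) else 0) = if G.Adj x y then 1 else 0 :=
        if_congr (G.adj_comm y x) rfl rfl
      simp [G.irrefl, c1]
    have h3 : ∑ z ∈ Finset.univ \ ({x, y} : Finset V),
        ((if G.Adj x z then (1:ℤ) else 0) - (if G.Adj y z then 1 else 0))
        = (Fintype.card V - 2 : ℕ) * ((G.degree x : ℤ) - G.degree y) := by
      have hc : ∀ z ∈ Finset.univ \ ({x, y} : Finset V),
          ((if G.Adj x z then (1:ℤ) else 0) - (if G.Adj y z then 1 else 0))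
            = (G.degree x : ℤ) - G.degree y := by
        intro z hz
        simp only [Finset.mem_sdiff, Finset.mem_insert, Finset.mem_singleton, not_or] at hz
        have e1 := ht x z (fun h => hz.2.1 h.symm)
        have e2 := ht y z (fun h => hz.2.2 h.symm)
        linarith
      rw [Finset.sum_congr rfl hc, Finset.sum_const, nsmul_eq_mul]
      congr 1
      rw [Finset.card_sdiff_of_subset (Finset.subset_univ _), Finset.card_univ, Finset.card_pair hxy]
    rw [h3, h2, add_zero] at hsum
    have hcast : ((Fintype.card V - 2 : ℕ) : ℤ) ≠ 1 := by omega
    have : (((Fintype.card V - 2 : ℕ) : ℤ) - 1) * ((G.degree x : ℤ) - G.degree y) = 0 := by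
      linarith
    rcases mul_eq_zero.mp this with h | h
    · omega
    · linarith
  -- get an edge
  have hedge : ∃ x y : V, G.Adj x y := by
    by_contra h
    push_neg at h
    exact hB (by ext a b; simp [h a b])
  obtain ⟨x₀, y₀, hxy₀⟩ := hedge
  have he := ht x₀ y₀ (G.ne_of_adj hxy₀)
  rw [if_pos hxy₀] at he
  apply hT
  ext a b
  simp only [SimpleGraph.top_adj]
  constructor
  · exact G.ne_of_adj
  · intro hab
    have h1 := ht a b hab
    have d1 := hdeg a x₀
    have d2 := hdeg b y₀
    by_cases h : G.Adj a b
    · exact h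
    · rw [if_neg h] at h1; exfalso; linarith

lemma pr_of_three {V : Type*} [Fintype V] [DecidableEq V] (G : SimpleGraph V)
    [DecidableRel G.Adj] {v0 v1 v2 : V}
    (h01 : v0 ≠ v1) (h02 : v0 ≠ v2) (h12 : v1 ≠ v2)
    (cover : ∀ x : V, x = v0 ∨ x = v1 ∨ x = v2) :
    PairwiseRegular G := by
  have duniv : (Finset.univ : Finset V) = {v0, v1, v2} := by
    ext x
    simpa using cover x
  have hdeg : ∀ x : V, (G.degree x : ℤ) =
      (if G.Adj x v0 then 1 else 0) + (if G.Adj x v1 then 1 else 0)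
        + (if G.Adj x v2 then 1 else 0) := by
    intro x
    rw [degree_eq_sum, duniv, Finset.sum_insert (by simp [h01, h02]),
      Finset.sum_insert (by simp [h12]), Finset.sum_singleton]
    ring
  refine ⟨(if G.Adj v0 v1 then 1 else 0) + (if G.Adj v0 v2 then 1 else 0)
    + (if G.Adj v1 v2 then 1 else 0), ?_⟩
  intro x y hxy
  have c10 : (if G.Adj v1 v0 then (1:ℤ) else 0) = if G.Adj v0 v1 then 1 else 0 :=
    if_congr (G.adj_comm _ _) rfl rfl
  have c20 : (if G.Adj v2 v0 then (1:ℤ) else 0) = if G.Adj v0 v2 then 1 else 0 :=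
    if_congr (G.adj_comm _ _) rfl rfl
  have c21 : (if G.Adj v2 v1 then (1:ℤ) else 0) = if G.Adj v1 v2 then 1 else 0 :=
    if_congr (G.adj_comm _ _) rfl rfl
  have hIr : ∀ v, ¬ G.Adj v v := fun v => G.irrefl
  rcases cover x with rfl | rfl | rfl <;> rcases cover y with rfl | rfl | rfl <;>
    first
      | exact absurd rfl hxy
      | (simp only [hdeg, c10, c20, c21, hIr, if_false]; ring)

theorem pairwise_regular_characterization {V : Type*} [Fintype V] [DecidableEq V]
    (hV : 2 ≤ Fintype.card V) (G : SimpleGraph V) [DecidableRel G.Adj] :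
    (PairwiseRegular G ∧ G ≠ ⊤ ∧ G ≠ ⊥) ↔
      (Nonempty (G ≃g K12) ∨ Nonempty (G ≃g K12ᶜ)) := by
  constructor
  · rintro ⟨hPR, hT, hB⟩
    have hcard := card_eq_three hV G hPR hT hB
    obtain ⟨e⟩ : Nonempty (V ≃ Fin 3) := ⟨Fintype.equivFinOfCardEq hcard⟩
    set v0 := e.symm 0 with hv0
    set v1 := e.symm 1 with hv1
    set v2 := e.symm 2 with hv2
    have h01 : v0 ≠ v1 := e.symm.injective.ne (by decide)
    have h02 : v0 ≠ v2 := e.symm.injective.ne (by decide)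
    have h12 : v1 ≠ v2 := e.symm.injective.ne (by decide)
    have cover : ∀ x : V, x = v0 ∨ x = v1 ∨ x = v2 := by
      intro x
      rcases fin3_cases (e x) with hh | hh | hh <;> rw [← e.symm_apply_apply x, hh] <;> tauto
    -- a non-edge between distinct vertices
    have hne : ∃ x y : V, x ≠ y ∧ ¬ G.Adj x y := by
      by_contra h
      push_neg at h
      exact hT (by ext a b; exact ⟨G.ne_of_adj, h a b⟩)
    obtain ⟨p, q, hpq, hpqn⟩ := hne
    -- an edge
    have hedge : ∃ x y : V, G.Adj x y := by
      by_contra h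
      push_neg at h
      exact hB (by ext a b; simp [h a b])
    obtain ⟨r, s, hrs⟩ := hedge
    have hIr : ∀ v, ¬ G.Adj v v := fun v => G.irrefl
    by_cases b01 : G.Adj v0 v1 <;> by_cases b02 : G.Adj v0 v2 <;> by_cases b12 : G.Adj v1 v2
    · -- all edges: contradiction with non-edge
      exfalso
      have b10 := b01.symm; have b20 := b02.symm; have b21 := b12.symm
      rcases cover p with rfl | rfl | rfl <;> rcases cover q with rfl | rfl | rfl <;> simp_all
    · -- path with center v0
      exact Or.inl (build_K12 G h01.symm h12 h02
        (fun x => by rcases cover x with h | h | h <;> tauto) b01.symm b02 b12)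
    · -- path with center v1
      exact Or.inl (build_K12 G h01 h02 h12 cover b01 b12 b02)
    · -- only edge v0 v1
      exact Or.inr (build_K12c G h01 h02 h12 cover b01 b02 b12)
    · -- path with center v2
      exact Or.inl (build_K12 G h02 h01 h12.symm
        (fun x => by rcases cover x with h | h | h <;> tauto) b02 b12.symm b01)
    · -- only edge v0 v2
      exact Or.inr (build_K12c G h02 h01 h12.symm
        (fun x => by rcases cover x with h | h | h <;> tauto) b02
        b01 (fun h => b12 h.symm))
    · -- only edge v1 v2
      exact Or.inr (build_K12c G h12 h01.symm h02.symm
        (fun x => by rcases cover x with h | h | h <;> tauto) b12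
        (fun h => b01 h.symm) (fun h => b02 h.symm))
    · -- no edges: contradiction with edge
      exfalso
      have nb10 : ¬ G.Adj v1 v0 := fun h => b01 h.symm
      have nb20 : ¬ G.Adj v2 v0 := fun h => b02 h.symm
      have nb21 : ¬ G.Adj v2 v1 := fun h => b12 h.symm
      rcases cover r with rfl | rfl | rfl <;> rcases cover s with rfl | rfl | rfl <;> simp_all
  · intro h
    obtain ⟨e⟩ : Nonempty (V ≃ Fin 3) := by
      rcases h with ⟨⟨f⟩⟩ | ⟨⟨f⟩⟩ <;> exact ⟨f.toEquiv⟩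
    have h01 : e.symm 0 ≠ e.symm 1 := e.symm.injective.ne (by decide)
    have h02 : e.symm 0 ≠ e.symm 2 := e.symm.injective.ne (by decide)
    have h12 : e.symm 1 ≠ e.symm 2 := e.symm.injective.ne (by decide)
    have cover : ∀ x : V, x = e.symm 0 ∨ x = e.symm 1 ∨ x = e.symm 2 := by
      intro x
      rcases fin3_cases (e x) with hh | hh | hh <;> rw [← e.symm_apply_apply x, hh] <;> tauto
    have hPR : PairwiseRegular G := pr_of_three G h01 h02 h12 cover
    have hex : (∃ x y : V, G.Adj x y) ∧ (∃ x y : V, x ≠ y ∧ ¬ G.Adj x y) := by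
      rcases h with ⟨⟨f⟩⟩ | ⟨⟨f⟩⟩
      · constructor
        · refine ⟨f.symm 0, f.symm 1, f.map_rel_iff.mp ?_⟩
          rw [RelIso.apply_symm_apply, RelIso.apply_symm_apply]
          simp [K12_adj]
        · refine ⟨f.symm 0, f.symm 2, ?_, fun hadj => ?_⟩
          · intro hh
            exact (by decide : (0 : Fin 3) ≠ 2)
              (by rw [← RelIso.apply_symm_apply f 0, hh, RelIso.apply_symm_apply])
          · have := f.map_rel_iff.mpr hadj
            rw [RelIso.apply_symm_apply, RelIso.apply_symm_apply] at this
            exact (by simp [K12_adj] : ¬ K12.Adj 0 2) this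
      · constructor
        · refine ⟨f.symm 0, f.symm 2, f.map_rel_iff.mp ?_⟩
          rw [RelIso.apply_symm_apply, RelIso.apply_symm_apply]
          simp [K12c_adj, K12_adj]
        · refine ⟨f.symm 0, f.symm 1, ?_, fun hadj => ?_⟩
          · intro hh
            exact (by decide : (0 : Fin 3) ≠ 1)
              (by rw [← RelIso.apply_symm_apply f 0, hh, RelIso.apply_symm_apply])
          · have := f.map_rel_iff.mpr hadj
            rw [RelIso.apply_symm_apply, RelIso.apply_symm_apply] at this
            exact (by simp [K12c_adj, K12_adj] : ¬ K12ᶜ.Adj 0 1) this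
    obtain ⟨⟨x, y, hxy⟩, ⟨p, q, hpq, hpqn⟩⟩ := hex
    refine ⟨hPR, fun hG => hpqn (by rw [hG]; exact (SimpleGraph.top_adj p q).mpr hpq),
      fun hG => by rw [hG] at hxy; exact hxy⟩
end

section
/- A finite simple graph G on at least 2 vertices is pairwise outer-regular (i.e., there is a constant t with d(x)+d(y)-2d(x,y) = t for all pairs of distinct vertices x, y) and is neither complete nor empty, if and only if G is isomorphic to K_{1,3} (a star with 3 leaves) or its complement (a triangle plus an isolated vertex). -/
/-- The star with 3 leaves, `K_{1,3}`, with center `0`. -/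
def K13 : SimpleGraph (Fin 4) :=
  SimpleGraph.fromEdgeSet {s(0, 1), s(0, 2), s(0, 3)}

/-- A graph is pairwise outer-regular if `d(x) + d(y) - 2 d(x,y)` is constant over
distinct pairs of vertices. -/
def PairwiseOuterRegular {V : Type*} [Fintype V] (G : SimpleGraph V) [DecidableRel G.Adj] : Prop :=
  ∃ t : ℤ, ∀ x y : V, x ≠ y →
    (G.degree x : ℤ) + (G.degree y : ℤ) - 2 * (if G.Adj x y then 1 else 0) = t

lemma K13_adj (a b : Fin 4) : K13.Adj a b ↔ a ≠ b ∧ (a = 0 ∨ b = 0) := by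
  fin_cases a <;> fin_cases b <;> simp [K13]

lemma K13c_adj (a b : Fin 4) : K13ᶜ.Adj a b ↔ a ≠ b ∧ a ≠ 0 ∧ b ≠ 0 := by
  rw [SimpleGraph.compl_adj, K13_adj]
  constructor
  · rintro ⟨h, h2⟩; exact ⟨h, fun ha => h2 ⟨h, Or.inl ha⟩, fun hb => h2 ⟨h, Or.inr hb⟩⟩
  · rintro ⟨h, ha, hb⟩; exact ⟨h, fun hc => hc.2.elim ha hb⟩

set_option linter.unusedSectionVars false

section
variable {V : Type*} [Fintype V] [DecidableEq V] {G : SimpleGraph V} [DecidableRel G.Adj]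

lemma deg_center {p : V} (h : ∀ u v, G.Adj u v ↔ u ≠ v ∧ (u = p ∨ v = p)) :
    G.degree p = Fintype.card V - 1 := by
  have hn : G.neighborFinset p = Finset.univ.erase p := by
    ext w
    rw [SimpleGraph.mem_neighborFinset, h, Finset.mem_erase]
    constructor
    · rintro ⟨h1, _⟩; exact ⟨fun e => h1 e.symm, Finset.mem_univ w⟩
    · rintro ⟨h1, _⟩; exact ⟨fun e => h1 e.symm, Or.inl rfl⟩
  rw [SimpleGraph.degree, hn, Finset.card_erase_of_mem (Finset.mem_univ p), Finset.card_univ]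

lemma deg_leaf {p v : V} (h : ∀ u v, G.Adj u v ↔ u ≠ v ∧ (u = p ∨ v = p)) (hv : v ≠ p) :
    G.degree v = 1 := by
  have hn : G.neighborFinset v = {p} := by
    ext w
    rw [SimpleGraph.mem_neighborFinset, h, Finset.mem_singleton]
    constructor
    · rintro ⟨h1, h2 | h2⟩
      · exact absurd h2 hv
      · exact h2
    · rintro rfl; exact ⟨hv, Or.inr rfl⟩
  rw [SimpleGraph.degree, hn, Finset.card_singleton]

lemma deg_isolated {q : V} (h : ∀ u v, G.Adj u v ↔ u ≠ v ∧ u ≠ q ∧ v ≠ q) :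
    G.degree q = 0 := by
  have hn : G.neighborFinset q = ∅ := by
    ext w
    rw [SimpleGraph.mem_neighborFinset, h]
    simp only [Finset.notMem_empty, iff_false]
    rintro ⟨_, h2, _⟩; exact h2 rfl
  rw [SimpleGraph.degree, hn, Finset.card_empty]

lemma deg_clique {q v : V} (h : ∀ u v, G.Adj u v ↔ u ≠ v ∧ u ≠ q ∧ v ≠ q) (hv : v ≠ q) :
    G.degree v = Fintype.card V - 2 := by
  have hn : G.neighborFinset v = (Finset.univ.erase q).erase v := by
    ext w
    rw [SimpleGraph.mem_neighborFinset, h, Finset.mem_erase, Finset.mem_erase]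
    constructor
    · rintro ⟨h1, _, h3⟩; exact ⟨fun e => h1 e.symm, h3, Finset.mem_univ w⟩
    · rintro ⟨h1, h2, _⟩; exact ⟨fun e => h1 e.symm, hv, h2⟩
  rw [SimpleGraph.degree, hn, Finset.card_erase_of_mem,
    Finset.card_erase_of_mem (Finset.mem_univ q), Finset.card_univ]
  · omega
  · exact Finset.mem_erase.2 ⟨hv, Finset.mem_univ v⟩

lemma exists_two_ne (hV4 : Fintype.card V = 4) (p : V) :
    ∃ y1, y1 ≠ p ∧ ∃ y2, y2 ≠ p ∧ y2 ≠ y1 := by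
  obtain ⟨y1, hy1⟩ := Fintype.exists_ne_of_one_lt_card (by omega) p
  have hy : 0 < ((Finset.univ.erase p).erase y1).card := by
    rw [Finset.card_erase_of_mem (Finset.mem_erase.2 ⟨hy1, Finset.mem_univ _⟩),
      Finset.card_erase_of_mem (Finset.mem_univ p), Finset.card_univ]
    omega
  obtain ⟨y2, hy2⟩ := Finset.card_pos.1 hy
  rw [Finset.mem_erase, Finset.mem_erase] at hy2
  exact ⟨y1, hy1, y2, hy2.2.1, hy2.1⟩

lemma star_iso (hV4 : Fintype.card V = 4) {p : V}
    (h : ∀ u v, G.Adj u v ↔ u ≠ v ∧ (u = p ∨ v = p)) : Nonempty (G ≃g K13) := by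
  let e1 := Fintype.equivFinOfCardEq hV4
  let e := e1.trans (Equiv.swap (e1 p) 0)
  have hep : e p = 0 := by simp [e]
  have h0 : ∀ x : V, e x = 0 ↔ x = p := fun x =>
    ⟨fun hx => e.injective (hx.trans hep.symm), fun hx => hx ▸ hep⟩
  refine ⟨⟨e, ?_⟩⟩
  intro a b
  rw [K13_adj, h, ne_eq, Equiv.apply_eq_iff_eq, h0, h0]

lemma compl_iso (hV4 : Fintype.card V = 4) {q : V}
    (h : ∀ u v, G.Adj u v ↔ u ≠ v ∧ u ≠ q ∧ v ≠ q) : Nonempty (G ≃g K13ᶜ) := by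
  let e1 := Fintype.equivFinOfCardEq hV4
  let e := e1.trans (Equiv.swap (e1 q) 0)
  have hep : e q = 0 := by simp [e]
  have h0 : ∀ x : V, e x = 0 ↔ x = q := fun x =>
    ⟨fun hx => e.injective (hx.trans hep.symm), fun hx => hx ▸ hep⟩
  refine ⟨⟨e, ?_⟩⟩
  intro a b
  rw [K13c_adj, h, ne_eq, Equiv.apply_eq_iff_eq, ne_eq, h0, ne_eq, h0]

lemma star_props (hV4 : Fintype.card V = 4) {p : V}
    (h : ∀ u v, G.Adj u v ↔ u ≠ v ∧ (u = p ∨ v = p)) :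
    PairwiseOuterRegular G ∧ G ≠ ⊤ ∧ G ≠ ⊥ := by
  obtain ⟨y1, hy1, y2, hy2, hy12⟩ := exists_two_ne hV4 p
  refine ⟨⟨2, ?_⟩, ?_, ?_⟩
  · intro x y hxy
    by_cases hx : x = p <;> by_cases hy : y = p
    · exact absurd (hx.trans hy.symm) hxy
    · rw [hx] at hxy ⊢
      rw [deg_center h, deg_leaf h hy, if_pos ((h p y).2 ⟨hxy, Or.inl rfl⟩), hV4]
      norm_num
    · rw [hy] at hxy ⊢
      rw [deg_center h, deg_leaf h hx, if_pos ((h x p).2 ⟨hxy, Or.inr rfl⟩), hV4]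
      norm_num
    · have hna : ¬ G.Adj x y := by
        intro ha
        rcases ((h x y).1 ha).2 with h2 | h2
        · exact hx h2
        · exact hy h2
      rw [deg_leaf h hx, deg_leaf h hy, if_neg hna]
      norm_num
  · intro hGT
    have hA : G.Adj y2 y1 := by rw [hGT]; exact hy12
    rcases ((h y2 y1).1 hA).2 with h2 | h2
    · exact hy2 h2
    · exact hy1 h2
  · intro hGB
    have hA : G.Adj p y1 := (h p y1).2 ⟨Ne.symm hy1, Or.inl rfl⟩
    rw [hGB] at hA
    exact hA

lemma compl_props (hV4 : Fintype.card V = 4) {q : V}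
    (h : ∀ u v, G.Adj u v ↔ u ≠ v ∧ u ≠ q ∧ v ≠ q) :
    PairwiseOuterRegular G ∧ G ≠ ⊤ ∧ G ≠ ⊥ := by
  obtain ⟨y1, hy1, y2, hy2, hy12⟩ := exists_two_ne hV4 q
  refine ⟨⟨2, ?_⟩, ?_, ?_⟩
  · intro x y hxy
    by_cases hx : x = q <;> by_cases hy : y = q
    · exact absurd (hx.trans hy.symm) hxy
    · rw [hx] at hxy ⊢
      rw [deg_isolated h, deg_clique h hy, if_neg (fun a => ((h q y).1 a).2.1 rfl), hV4]
      norm_num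
    · rw [hy] at hxy ⊢
      rw [deg_isolated h, deg_clique h hx, if_neg (fun a => ((h x q).1 a).2.2 rfl), hV4]
      norm_num
    · rw [deg_clique h hx, deg_clique h hy, if_pos ((h x y).2 ⟨hxy, hx, hy⟩), hV4]
      norm_num
  · intro hGT
    have : ¬ G.Adj q y1 := fun a => ((h q y1).1 a).2.1 rfl
    rw [hGT] at this
    exact this (Ne.symm hy1)
  · intro hGB
    have hA : G.Adj y2 y1 := (h y2 y1).2 ⟨hy12, hy2, hy1⟩
    rw [hGB] at hA
    exact hA

end

theorem pairwise_outer_regular_characterization {V : Type*} [Fintype V] [DecidableEq V]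
    (hV : 2 ≤ Fintype.card V) (G : SimpleGraph V) [DecidableRel G.Adj] :
    (PairwiseOuterRegular G ∧ G ≠ ⊤ ∧ G ≠ ⊥) ↔
      (Nonempty (G ≃g K13) ∨ Nonempty (G ≃g K13ᶜ)) := by
  constructor
  · rintro ⟨⟨t, ht⟩, hT, hB⟩
    -- there is an edge
    obtain ⟨a, b, hab⟩ : ∃ a b, G.Adj a b := by
      by_contra hc
      push_neg at hc
      exact hB (by ext a b; simp [hc a b])
    -- there is a non-edge
    obtain ⟨c, d, hcd, hncd⟩ : ∃ c d, c ≠ d ∧ ¬ G.Adj c d := by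
      by_contra hc
      push_neg at hc
      apply hT
      ext a b
      simp only [SimpleGraph.top_adj]
      exact ⟨fun h => h.ne, fun h => hc a b h⟩
    have hab' := ht a b hab.ne
    have hcd' := ht c d hcd
    rw [if_pos hab] at hab'
    rw [if_neg hncd] at hcd'
    -- G is not regular
    obtain ⟨p0, q0, hpq0⟩ : ∃ p q : V, G.degree p ≠ G.degree q := by
      by_contra hc
      push_neg at hc
      have h1 := hc a b
      have h2 := hc a c
      have h3 := hc a d
      omega
    have hp0q0 : p0 ≠ q0 := fun e => hpq0 (by rw [e])
    -- there is a third vertex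
    obtain ⟨z0, hz0p, hz0q⟩ : ∃ z, z ≠ p0 ∧ z ≠ q0 := by
      by_contra hc
      push_neg at hc
      have hall : ∀ z : V, z = p0 ∨ z = q0 := by
        intro z
        by_cases h1 : z = p0
        · exact Or.inl h1
        · exact Or.inr (hc z h1)
      apply hpq0
      by_cases hA : G.Adj p0 q0
      · have e1 : G.neighborFinset p0 = {q0} := by
          ext w
          rw [SimpleGraph.mem_neighborFinset, Finset.mem_singleton]
          constructor
          · intro hw
            rcases hall w with rfl | rfl
            · exact absurd hw (G.irrefl)
            · rfl
          · rintro rfl; exact hA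
        have e2 : G.neighborFinset q0 = {p0} := by
          ext w
          rw [SimpleGraph.mem_neighborFinset, Finset.mem_singleton]
          constructor
          · intro hw
            rcases hall w with rfl | rfl
            · rfl
            · exact absurd hw (G.irrefl)
          · rintro rfl; exact hA.symm
        rw [SimpleGraph.degree, SimpleGraph.degree, e1, e2, Finset.card_singleton,
          Finset.card_singleton]
      · have e1 : G.neighborFinset p0 = ∅ := by
          ext w
          rw [SimpleGraph.mem_neighborFinset]
          simp only [Finset.notMem_empty, iff_false]
          intro hw
          rcases hall w with rfl | rfl
          · exact G.irrefl hw
          · exact hA hw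
        have e2 : G.neighborFinset q0 = ∅ := by
          ext w
          rw [SimpleGraph.mem_neighborFinset]
          simp only [Finset.notMem_empty, iff_false]
          intro hw
          rcases hall w with rfl | rfl
          · exact hA hw.symm
          · exact G.irrefl hw
        rw [SimpleGraph.degree, SimpleGraph.degree, e1, e2]
    -- the key structural lemma
    have hK : ∀ x y z' : V, (G.degree x : ℤ) = (G.degree y : ℤ) + 2 → x ≠ z' → y ≠ z' →
        x ≠ y → G.Adj x z' ∧ ¬ G.Adj y z' := by
      intro x y z' hd hxz hyz hxy
      have h1 := ht x z' hxz
      have h2 := ht y z' hyz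
      by_cases a1 : G.Adj x z' <;> by_cases a2 : G.Adj y z' <;>
        simp only [a1, a2, if_true, if_false] at h1 h2 <;>
        first
          | exact ⟨a1, a2⟩
          | (exfalso; omega)
    -- degree dichotomy
    have hdich : ∀ p q : V, (G.degree p : ℤ) = (G.degree q : ℤ) + 2 →
        ∀ v : V, G.degree v = G.degree p ∨ G.degree v = G.degree q := by
      intro p q hpq v
      by_cases hvp : v = p
      · left; rw [hvp]
      by_cases hvq : v = q
      · right; rw [hvq]
      have hpq' : p ≠ q := by intro e; rw [e] at hpq; omega
      have h1 := ht v p hvp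
      have h2 := ht q p (Ne.symm hpq')
      have h3 := ht v q hvq
      have h4 := ht p q hpq'
      by_cases a1 : G.Adj v p <;> by_cases a2 : G.Adj q p <;> by_cases a3 : G.Adj v q <;>
        by_cases a4 : G.Adj p q <;>
        simp only [a1, a2, a3, a4, if_true, if_false] at h1 h2 h3 h4 <;> omega
    -- main argument
    have main : ∀ p q : V, p ≠ q → z0 ≠ p → z0 ≠ q → (G.degree p : ℤ) = (G.degree q : ℤ) + 2 →
        Nonempty (G ≃g K13) ∨ Nonempty (G ≃g K13ᶜ) := by
      intro p q hpq hzp hzq hd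
      by_cases hA2 : ∃ y1 y2 : V, G.degree y1 = G.degree q ∧ G.degree y2 = G.degree q ∧ y1 ≠ y2
      · -- star case
        obtain ⟨y1, y2, hy1, hy2, hy12⟩ := hA2
        have hy1p : y1 ≠ p := fun e => by rw [e] at hy1; omega
        have hy2p : y2 ≠ p := fun e => by rw [e] at hy2; omega
        have hBsing : ∀ v : V, G.degree v = G.degree p → v = p := by
          intro v hv
          by_contra hvp
          have hvy1 : v ≠ y1 := fun e => by rw [e] at hv; omega
          have hvy2 : v ≠ y2 := fun e => by rw [e] at hv; omega
          have c1 : G.Adj v y2 := (hK v y1 y2 (by omega) hvy2 hy12 hvy1).1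
          have c2 : ¬ G.Adj y2 v :=
            (hK p y2 v (by omega) (Ne.symm hvp) (Ne.symm hvy2) (Ne.symm hy2p)).2
          exact c2 c1.symm
        have hApq : ∀ v : V, v ≠ p → G.degree v = G.degree q := by
          intro v hv
          rcases hdich p q hd v with h | h
          · exact absurd (hBsing v h) hv
          · exact h
        have hchar : ∀ u v, G.Adj u v ↔ u ≠ v ∧ (u = p ∨ v = p) := by
          have hadjp : ∀ v : V, v ≠ p → G.Adj p v := by
            intro v hv
            by_cases hvy : v = y1
            · exact (hK p y2 v (by have := hApq y2 hy2p; omega) (Ne.symm hv)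
                (by rw [hvy]; exact Ne.symm hy12) (Ne.symm hy2p)).1
            · exact (hK p y1 v (by have := hApq y1 hy1p; omega) (Ne.symm hv)
                (fun e => hvy e.symm) (Ne.symm hy1p)).1
          intro u v
          constructor
          · intro hadj
            refine ⟨hadj.ne, ?_⟩
            by_contra hc
            push_neg at hc
            obtain ⟨hup, hvp⟩ := hc
            exact (hK p u v (by have := hApq u hup; omega) (Ne.symm hvp) hadj.ne
              (Ne.symm hup)).2 hadj
          · rintro ⟨huv, rfl | rfl⟩
            · exact hadjp v (Ne.symm huv)
            · exact (hadjp u huv).symm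
        -- compute the cardinality
        have hdegp := deg_center hchar
        have hdegy1 := deg_leaf hchar hy1p
        have hdegy2 := deg_leaf hchar hy2p
        have e1 := ht p y1 (Ne.symm hy1p)
        have e2 := ht y1 y2 hy12
        have hn12 : ¬ G.Adj y1 y2 := by
          intro a
          rcases ((hchar y1 y2).1 a).2 with h | h
          · exact hy1p h
          · exact hy2p h
        rw [if_pos ((hchar p y1).2 ⟨Ne.symm hy1p, Or.inl rfl⟩)] at e1
        rw [if_neg hn12] at e2
        rw [hdegp, hdegy1] at e1
        rw [hdegy1, hdegy2] at e2
        have hV4 : Fintype.card V = 4 := by omega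
        exact Or.inl (star_iso hV4 hchar)
      · -- complement case
        push_neg at hA2
        have hBall : ∀ v : V, v ≠ q → G.degree v = G.degree p := by
          intro v hv
          rcases hdich p q hd v with h | h
          · exact h
          · exact absurd (hA2 v q h rfl) hv
        have hqnone : ∀ w : V, ¬ G.Adj q w := by
          intro w hadj
          have hwq : w ≠ q := fun e => G.irrefl (e ▸ hadj)
          by_cases hwp : w = p
          · subst hwp
            exact (hK z0 q w (by have := hBall z0 hzq; omega) hzp (Ne.symm hwq) hzq).2 hadj
          · exact (hK p q w hd (Ne.symm hwp) (Ne.symm hwq) hpq).2 hadj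
        have hchar : ∀ u v, G.Adj u v ↔ u ≠ v ∧ u ≠ q ∧ v ≠ q := by
          intro u v
          constructor
          · intro hadj
            exact ⟨hadj.ne, fun e => hqnone v (e ▸ hadj), fun e => hqnone u (e ▸ hadj).symm⟩
          · rintro ⟨huv, huq, hvq⟩
            exact (hK u q v (by have := hBall u huq; omega) huv (Ne.symm hvq) huq).1
        have hdegq := deg_isolated hchar
        have hdegp := deg_clique hchar hpq
        have hdegz := deg_clique hchar hzq
        have e1 := ht p z0 (Ne.symm hzp)
        have e2 := ht p q hpq
        rw [if_pos ((hchar p z0).2 ⟨Ne.symm hzp, hpq, hzq⟩)] at e1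
        rw [if_neg (fun a => hqnone p a.symm)] at e2
        rw [hdegp, hdegz] at e1
        rw [hdegp, hdegq] at e2
        have hV4 : Fintype.card V = 4 := by omega
        exact Or.inr (compl_iso hV4 hchar)
    -- orient the degree difference
    have h1 := ht p0 z0 (Ne.symm hz0p)
    have h2 := ht q0 z0 (Ne.symm hz0q)
    have horient : (G.degree p0 : ℤ) = (G.degree q0 : ℤ) + 2 ∨
        (G.degree q0 : ℤ) = (G.degree p0 : ℤ) + 2 := by
      by_cases a1 : G.Adj p0 z0 <;> by_cases a2 : G.Adj q0 z0 <;>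
        simp only [a1, a2, if_true, if_false] at h1 h2 <;> omega
    rcases horient with h | h
    · exact main p0 q0 hp0q0 hz0p hz0q h
    · exact main q0 p0 (Ne.symm hp0q0) hz0q hz0p h
  · rintro (he | he)
    · obtain ⟨e⟩ := he
      have hV4 : Fintype.card V = 4 := by
        rw [← Fintype.card_fin 4]
        exact Fintype.card_congr e.toEquiv
      have h0 : ∀ x : V, e x = 0 ↔ x = e.symm 0 := fun x =>
        ⟨fun h => by rw [← h]; exact (e.symm_apply_apply x).symm,
         fun h => by rw [h]; exact e.apply_symm_apply 0⟩
      have hchar : ∀ u v, G.Adj u v ↔ u ≠ v ∧ (u = e.symm 0 ∨ v = e.symm 0) := by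
        intro u v
        rw [← e.map_rel_iff, K13_adj, ne_eq, ← h0, ← h0]
        constructor
        · rintro ⟨h1, h2⟩; exact ⟨fun hc => h1 (by rw [hc]), h2⟩
        · rintro ⟨h1, h2⟩; exact ⟨fun hc => h1 (e.injective hc), h2⟩
      exact star_props hV4 hchar
    · obtain ⟨e⟩ := he
      have hV4 : Fintype.card V = 4 := by
        rw [← Fintype.card_fin 4]
        exact Fintype.card_congr e.toEquiv
      have h0 : ∀ x : V, e x = 0 ↔ x = e.symm 0 := fun x =>
        ⟨fun h => by rw [← h]; exact (e.symm_apply_apply x).symm,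
         fun h => by rw [h]; exact e.apply_symm_apply 0⟩
      have hchar : ∀ u v, G.Adj u v ↔ u ≠ v ∧ u ≠ e.symm 0 ∧ v ≠ e.symm 0 := by
        intro u v
        rw [← e.map_rel_iff, K13c_adj]
        simp only [ne_eq, h0, EmbeddingLike.apply_eq_iff_eq]
      exact compl_props hV4 hchar
end

section
/- If a pairwise regular graph G is neither complete nor empty, then any two vertices have degrees differing by at most 1. -/
theorem pairwise_regular_degrees_close {V : Type*} [Fintype V] [DecidableEq V]
    (G : SimpleGraph V) [DecidableRel G.Adj]
    (hreg : PairwiseRegular G) (hnc : G ≠ ⊤) (hne : G ≠ ⊥) :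
    ∀ x y : V, |(G.degree x : ℤ) - (G.degree y : ℤ)| ≤ 1 := by
  obtain ⟨t, ht⟩ := hreg
  intro x y
  by_cases hxy : x = y
  · subst hxy; simp
  by_cases hz : ∃ z, z ≠ x ∧ z ≠ y
  · obtain ⟨z, hzx, hzy⟩ := hz
    have h1 := ht x z (fun h => hzx h.symm)
    have h2 := ht y z (fun h => hzy h.symm)
    have : (G.degree x : ℤ) - G.degree y =
        (if G.Adj x z then 1 else 0) - (if G.Adj y z then 1 else 0) := by linarith
    rw [this]
    split_ifs <;> norm_num
  · push_neg at hz
    -- V = {x, y}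
    exfalso
    by_cases ha : G.Adj x y
    · apply hnc
      ext a b
      simp only [SimpleGraph.top_adj]
      constructor
      · exact fun h => G.ne_of_adj h
      · intro hab
        have ca : a = x ∨ a = y := if h : a = x then Or.inl h else Or.inr (hz a h)
        have cb : b = x ∨ b = y := if h : b = x then Or.inl h else Or.inr (hz b h)
        rcases ca with rfl | rfl <;> rcases cb with rfl | rfl
        · exact absurd rfl hab
        · exact ha
        · exact ha.symm
        · exact absurd rfl hab
    · apply hne
      ext a b
      simp only [SimpleGraph.bot_adj, iff_false]
      intro hab
      have hab' := G.ne_of_adj hab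
      have ca : a = x ∨ a = y := if h : a = x then Or.inl h else Or.inr (hz a h)
      have cb : b = x ∨ b = y := if h : b = x then Or.inl h else Or.inr (hz b h)
      rcases ca with rfl | rfl <;> rcases cb with rfl | rfl
      · exact hab' rfl
      · exact ha hab
      · exact ha hab.symm
      · exact hab' rfl
end

section
/- For integers r ≥ h+2 and h > 2, the inclusion matrix A(r,h), whose rows are indexed by h-element subsets of [r], whose columns are indexed by 2-element subsets of [r], and whose (S,T) entry is 1 if T ⊆ S and 0 otherwise, has rank equal to C(r,2) (over the rationals). -/
/-! A vector `x` in the kernel of the inclusion matrix is a function on pairs whose sum over the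
pairs inside every `h`-set vanishes. Comparing the `h`-sets `E ∪ {a}` and `E ∪ {b}` shows that
`e ↦ x {a, e} - x {b, e}` sums to zero over every `(h - 1)`-subset of the `r - 2 > h - 1` points
other than `a` and `b`; exchanging one point of such a subset shows the function is constant, so
it vanishes. Hence `x` agrees on any two pairs sharing a point, so it is constant on pairs, and a single `h`-set gives `C(h, 2) • x {a, b} = 0`. -/

open Finset
open scoped Matrix

section PairSums

variable {α M : Type*} [DecidableEq α]

theorem sum_powersetCard_two_insert [AddCommMonoid M] {a : α} {s : Finset α} (ha : a ∉ s)
    (X : Finset α → M) :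
    ∑ T ∈ (insert a s).powersetCard 2, X T =
      ∑ e ∈ s, X {a, e} + ∑ T ∈ s.powersetCard 2, X T := by
  have hdisj : Disjoint (s.powersetCard 2) ((s.powersetCard 1).image (insert a)) := by
    simp only [disjoint_left, mem_image, mem_powersetCard, not_exists, not_and]
    intro T hT U _ hUT
    exact ha (hT.1 (hUT ▸ mem_insert_self a U))
  have hinj : Set.InjOn (insert a) (s.powersetCard 1 : Set (Finset α)) := by
    rintro U (hU : U ∈ s.powersetCard 1) V (hV : V ∈ s.powersetCard 1) hUV
    have hUa : a ∉ U := fun h => ha ((mem_powersetCard.1 hU).1 h)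
    have hVa : a ∉ V := fun h => ha ((mem_powersetCard.1 hV).1 h)
    rw [← erase_insert hUa, hUV, erase_insert hVa]
  rw [powersetCard_succ_insert ha, sum_union hdisj, sum_image hinj, powersetCard_one, sum_map,
    add_comm]
  rfl

variable [AddCommGroup M] [IsAddTorsionFree M]

theorem eq_zero_of_forall_sum_powersetCard_eq_zero {U : Finset α} {k : ℕ} (hk : k ≠ 0)
    (hkU : k < #U) {f : α → M} (hf : ∀ S ∈ U.powersetCard k, ∑ x ∈ S, f x = 0) {x : α}
    (hx : x ∈ U) : f x = 0 := by
  have hconst : ∀ y ∈ U, f y = f x := by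
    intro y hy
    obtain ⟨D, hDU, hD⟩ := exists_subset_card_eq (s := U \ {x, y}) (n := k - 1) <| by
      have := le_card_sdiff {x, y} U
      have := card_le_two (a := x) (b := y)
      omega
    have hxD : x ∉ D := fun h => (mem_sdiff.1 (hDU h)).2 (by simp)
    have hyD : y ∉ D := fun h => (mem_sdiff.1 (hDU h)).2 (by simp)
    have hsum : ∀ z ∈ U, z ∉ D → f z + ∑ w ∈ D, f w = 0 := fun z hz hzD => by
      rw [← sum_insert hzD]
      refine hf _ (mem_powersetCard.2 ⟨insert_subset hz fun w hw => ?_, ?_⟩)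
      · exact (mem_sdiff.1 (hDU hw)).1
      · rw [card_insert_of_notMem hzD, hD]; omega
    exact add_right_cancel ((hsum y hy hyD).trans (hsum x hx hxD).symm)
  obtain ⟨S, hSU, hS⟩ := exists_subset_card_eq hkU.le
  have h0 := hf S (mem_powersetCard.2 ⟨hSU, hS⟩)
  rw [sum_congr rfl fun y hy => hconst y (hSU hy), sum_const, hS] at h0
  exact (nsmul_eq_zero_iff_right hk).1 h0

variable [Fintype α] {h : ℕ} {X : Finset α → M}

theorem pair_eq_pair_of_sum_powersetCard_two_eq_zero (h2 : 2 ≤ h)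
    (hα : h + 2 ≤ Fintype.card α) (hX : ∀ S : Finset α, #S = h → ∑ T ∈ S.powersetCard 2, X T = 0)
    {a b e : α} (hae : a ≠ e) (hbe : b ≠ e) : X {a, e} = X {b, e} := by
  have hU : h - 1 < #(univ \ {a, b}) := by
    have := le_card_sdiff {a, b} univ
    have := card_le_two (a := a) (b := b)
    rw [card_univ] at *
    omega
  rw [← sub_eq_zero]
  refine eq_zero_of_forall_sum_powersetCard_eq_zero (f := fun e => X {a, e} - X {b, e})
    (by omega) hU (fun S hS => ?_) (by simp [hae.symm, hbe.symm])
  obtain ⟨hSU, hS⟩ := mem_powersetCard.1 hS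
  have haS : a ∉ S := fun h => (mem_sdiff.1 (hSU h)).2 (by simp)
  have hbS : b ∉ S := fun h => (mem_sdiff.1 (hSU h)).2 (by simp)
  have hXa := hX (insert a S) (by rw [card_insert_of_notMem haS, hS]; omega)
  have hXb := hX (insert b S) (by rw [card_insert_of_notMem hbS, hS]; omega)
  rw [sum_powersetCard_two_insert haS] at hXa
  rw [sum_powersetCard_two_insert hbS] at hXb
  rw [sum_sub_distrib, sub_eq_zero]
  exact add_right_cancel (hXa.trans hXb.symm)

theorem eq_zero_of_sum_powersetCard_two_eq_zero (h2 : 2 ≤ h)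
    (hα : h + 2 ≤ Fintype.card α) (hX : ∀ S : Finset α, #S = h → ∑ T ∈ S.powersetCard 2, X T = 0)
    {T : Finset α} (hT : #T = 2) : X T = 0 := by
  have hstar {a b e : α} : a ≠ e → b ≠ e → X {a, e} = X {b, e} :=
    pair_eq_pair_of_sum_powersetCard_two_eq_zero h2 hα hX
  have hpairs : ∀ T' ∈ univ.powersetCard 2, X T' = X T := by
    intro T' hT'
    obtain ⟨a, b, hab, rfl⟩ := card_eq_two.1 hT
    obtain ⟨c, d, hcd, rfl⟩ := card_eq_two.1 (mem_powersetCard.1 hT').2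
    rcases eq_or_ne d a with rfl | hda
    · rw [hstar hcd hab.symm, pair_comm]
    · rw [hstar hcd hda.symm, pair_comm a d, hstar hda hab.symm, pair_comm]
  obtain ⟨S, -, hS⟩ := exists_subset_card_eq (s := (univ : Finset α)) (n := h) (by simp; omega)
  have h0 := hX S hS
  rw [sum_congr rfl fun T' hT' => hpairs T' (powersetCard_mono (subset_univ S) hT'), sum_const,
    card_powersetCard, hS] at h0
  exact (nsmul_eq_zero_iff_right (Nat.choose_pos h2).ne').1 h0

end PairSums

section InclusionMatrix

def inclusionMatrix (α R : Type*) [DecidableEq α] [Zero R] [One R] (k h : ℕ) :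
    Matrix {S : Finset α // #S = h} {T : Finset α // #T = k} R :=
  Matrix.of fun S T => if T.1 ⊆ S.1 then 1 else 0

variable {α R : Type*} [DecidableEq α] [Fintype α]

theorem inclusionMatrix_mulVec_apply [NonAssocSemiring R] {k h : ℕ}
    (x : {T : Finset α // #T = k} → R) (S : {S : Finset α // #S = h}) :
    (inclusionMatrix α R k h *ᵥ x) S =
      ∑ T ∈ S.1.powersetCard k, Function.extend Subtype.val x 0 T := by
  simp only [Matrix.mulVec, dotProduct, inclusionMatrix, Matrix.of_apply, ite_mul, one_mul,
    zero_mul]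
  simp_rw [← Subtype.val_injective.extend_apply x 0]
  rw [← sum_subtype (univ.filter (#· = k)) (by simp)
    (fun T => if T ⊆ S.1 then Function.extend Subtype.val x 0 T else 0), ← sum_filter,
    filter_filter]
  congr 1
  ext T
  simp [and_comm]

theorem ker_mulVecLin_inclusionMatrix_two [CommRing R] [IsAddTorsionFree R] {h : ℕ}
    (h2 : 2 ≤ h) (hα : h + 2 ≤ Fintype.card α) :
    LinearMap.ker (inclusionMatrix α R 2 h).mulVecLin = ⊥ := by
  refine LinearMap.ker_eq_bot'.2 fun x hx => funext fun T => ?_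
  rw [← Subtype.val_injective.extend_apply x 0 T]
  refine eq_zero_of_sum_powersetCard_two_eq_zero h2 hα (fun S hS => ?_) T.2
  rw [← inclusionMatrix_mulVec_apply x ⟨S, hS⟩]
  exact congrFun hx _

theorem rank_inclusionMatrix_two [CommRing R] [StrongRankCondition R] [IsAddTorsionFree R]
    {h : ℕ} (h2 : 2 ≤ h) (hα : h + 2 ≤ Fintype.card α) :
    (inclusionMatrix α R 2 h).rank = (Fintype.card α).choose 2 := by
  rw [Matrix.rank, LinearMap.finrank_range_of_inj
    (LinearMap.ker_eq_bot.1 (ker_mulVecLin_inclusionMatrix_two h2 hα)), Module.finrank_pi,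
    Fintype.card_finset_len]

end InclusionMatrix

theorem gottlieb_rank (r h : ℕ) (hh : 2 < h) (hr : h + 2 ≤ r) :
    (Matrix.of (fun (S : {S : Finset (Fin r) // S.card = h})
        (T : {T : Finset (Fin r) // T.card = 2}) =>
      if T.1 ⊆ S.1 then (1 : ℚ) else 0)).rank = r.choose 2 := by
  have hrank := rank_inclusionMatrix_two (α := Fin r) (R := ℚ) hh.le (by rwa [Fintype.card_fin])
  rwa [Fintype.card_fin] at hrank
end

section
/- Let h ≥ 4, 0 < p < 1, δ = p^h(1-p)^(C(h,2)-h), and let p̄ ∈ (0,1) satisfy p̄^h(1-p̄)^(C(h,2)-h) = δ (so p̄ is the conjugate of p with respect to the cycle C_h). Let r ≥ h+1 and define weights on pairs from [r] by: w({i,j}) = p̄ if r ∈ {i,j}, and w({i,j}) = p otherwise. Then for every injective map φ: [h] → [r], letting H = C_h be the h-cycle on [h], we have ∏_{(i,j)∈E(H)} w(φ(i),φ(j)) · ∏_{(i,j)∉E(H), i<j} (1 - w(φ(i),φ(j))) = δ. -/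
open SimpleGraph Finset

lemma prod_ite_mem_aux {n : ℕ} (G : SimpleGraph (Fin n)) [DecidableRel G.Adj]
    (k : Fin n) (a b : ℝ) :
    ∏ e ∈ G.edgeFinset, (if k ∈ e then a else b)
      = a ^ G.degree k * b ^ (#G.edgeFinset - G.degree k) := by
  classical
  rw [Finset.prod_ite, Finset.prod_const, Finset.prod_const]
  have h1 : #(G.edgeFinset.filter (fun e => k ∈ e)) = G.degree k := by
    rw [← SimpleGraph.incidenceFinset_eq_filter, SimpleGraph.card_incidenceFinset_eq_degree]
  have h2 := Finset.card_filter_add_card_filter_not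
    (s := G.edgeFinset) (p := fun e => k ∈ e)
  congr 1
  · rw [h1]
  · congr 1
    omega

theorem cycle_counterexample (h : ℕ) (hh : 4 ≤ h) (p pbar : ℝ)
    (hp : p ∈ Set.Ioo (0 : ℝ) 1) (hpbar : pbar ∈ Set.Ioo (0 : ℝ) 1)
    (hconj : pbar ^ h * (1 - pbar) ^ (h.choose 2 - h) = p ^ h * (1 - p) ^ (h.choose 2 - h))
    (r : ℕ) (hr : h + 1 ≤ r)
    (w : Sym2 (Fin r) → ℝ)
    (hwdef : ∀ e : Sym2 (Fin r),
      w e = if (⟨r - 1, by omega⟩ : Fin r) ∈ e then pbar else p) :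
    ∀ φ : Fin h → Fin r, Function.Injective φ →
      (∏ e ∈ (SimpleGraph.cycleGraph h).edgeFinset, w (e.map φ)) *
        (∏ e ∈ (SimpleGraph.cycleGraph h)ᶜ.edgeFinset, (1 - w (e.map φ)))
        = p ^ h * (1 - p) ^ (h.choose 2 - h) := by
  intro φ hφ
  obtain ⟨n, rfl⟩ : ∃ n, h = n + 3 := ⟨h - 3, by omega⟩
  set v : Fin r := (⟨r - 1, by omega⟩ : Fin r) with hv
  set m : ℕ := (n + 3).choose 2 - (n + 3) with hm
  -- arithmetic about m
  have e0 : (n + 3).choose 2 * 2 = (n + 3) * n + (n + 3) * 2 := by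
    rw [Nat.choose_two_right, show (n + 3) - 1 = n + 2 by omega]
    have hd : 2 ∣ (n + 3) * (n + 2) := by
      rw [show (n + 3) * (n + 2) = (n + 2) * (n + 2 + 1) by ring]
      exact (Nat.even_mul_succ_self (n + 2)).two_dvd
    rw [Nat.div_mul_cancel hd]
    ring
  obtain ⟨P, hP⟩ : ∃ P, (n + 3) * n = P := ⟨_, rfl⟩
  rw [hP] at e0
  have hm2 : m * 2 = P := by omega
  have hPn : 2 * n ≤ P := by
    rw [← hP]; exact Nat.mul_le_mul (by omega : 2 ≤ n + 3) (le_refl n)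
  have hmn : n ≤ m := by omega
  -- degrees and cards
  have hdeg : ∀ k : Fin (n + 3), (SimpleGraph.cycleGraph (n + 3)).degree k = 2 :=
    fun k => SimpleGraph.cycleGraph_degree_three_le
  have hdegc : ∀ k : Fin (n + 3), (SimpleGraph.cycleGraph (n + 3))ᶜ.degree k = n := by
    intro k
    rw [SimpleGraph.degree_compl, hdeg k, Fintype.card_fin]
    omega
  have hcard : #(SimpleGraph.cycleGraph (n + 3)).edgeFinset = n + 3 := by
    have hs := SimpleGraph.sum_degrees_eq_twice_card_edges (SimpleGraph.cycleGraph (n + 3))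
    simp only [hdeg, Finset.sum_const, Finset.card_univ, Fintype.card_fin,
      smul_eq_mul] at hs
    omega
  have hcardc : #((SimpleGraph.cycleGraph (n + 3))ᶜ.edgeFinset) = m := by
    have hs := SimpleGraph.sum_degrees_eq_twice_card_edges ((SimpleGraph.cycleGraph (n + 3))ᶜ)
    simp only [hdegc, Finset.sum_const, Finset.card_univ, Fintype.card_fin,
      smul_eq_mul] at hs
    rw [hP] at hs
    omega
  -- key conjugate identity
  have hp0 : (0 : ℝ) < p := hp.1
  have hp1 : p < 1 := hp.2
  have hq0 : (0 : ℝ) < pbar := hpbar.1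
  have hq1 : pbar < 1 := hpbar.2
  have key : pbar ^ 2 * (1 - pbar) ^ n = p ^ 2 * (1 - p) ^ n := by
    have hB : n * (n + 3) = m * 2 := by rw [mul_comm, hP]; omega
    have hA : 2 * (n + 3) = (n + 3) * 2 := by ring
    have hpow : (pbar ^ 2 * (1 - pbar) ^ n) ^ (n + 3)
        = (p ^ 2 * (1 - p) ^ n) ^ (n + 3) := by
      calc (pbar ^ 2 * (1 - pbar) ^ n) ^ (n + 3)
          = pbar ^ (2 * (n + 3)) * (1 - pbar) ^ (n * (n + 3)) := by
            rw [mul_pow, ← pow_mul, ← pow_mul]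
        _ = (pbar ^ (n + 3) * (1 - pbar) ^ m) ^ 2 := by
            rw [hA, hB, mul_pow, ← pow_mul, ← pow_mul]
        _ = (p ^ (n + 3) * (1 - p) ^ m) ^ 2 := by rw [hconj]
        _ = p ^ (2 * (n + 3)) * (1 - p) ^ (n * (n + 3)) := by
            rw [hA, hB, mul_pow, ← pow_mul, ← pow_mul]
        _ = (p ^ 2 * (1 - p) ^ n) ^ (n + 3) := by
            rw [mul_pow, ← pow_mul, ← pow_mul]
    have h1 : (0 : ℝ) ≤ pbar ^ 2 * (1 - pbar) ^ n :=
      mul_nonneg (by positivity) (pow_nonneg (by linarith) n)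
    have h2 : (0 : ℝ) ≤ p ^ 2 * (1 - p) ^ n :=
      mul_nonneg (by positivity) (pow_nonneg (by linarith) n)
    exact (pow_left_inj₀ h1 h2 (by omega : n + 3 ≠ 0)).mp hpow
  by_cases hvr : ∃ k, φ k = v
  · obtain ⟨k, hk⟩ := hvr
    have hwe : ∀ e : Sym2 (Fin (n + 3)), w (e.map φ) = if k ∈ e then pbar else p := by
      intro e
      rw [hwdef]
      by_cases hke : k ∈ e
      · rw [if_pos hke, if_pos (Sym2.mem_map.mpr ⟨k, hke, hk⟩)]
      · rw [if_neg hke, if_neg]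
        intro hcon
        obtain ⟨a, ha, hav⟩ := Sym2.mem_map.mp hcon
        exact hke (hφ (hav.trans hk.symm) ▸ ha)
    have P1 : (∏ e ∈ (SimpleGraph.cycleGraph (n + 3)).edgeFinset, w (e.map φ))
        = pbar ^ 2 * p ^ (n + 1) := by
      rw [Finset.prod_congr rfl (fun e _ => hwe e), prod_ite_mem_aux, hdeg, hcard,
        show n + 3 - 2 = n + 1 by omega]
    have P2 : (∏ e ∈ ((SimpleGraph.cycleGraph (n + 3))ᶜ).edgeFinset, (1 - w (e.map φ)))
        = (1 - pbar) ^ n * (1 - p) ^ (m - n) := by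
      have : ∀ e ∈ ((SimpleGraph.cycleGraph (n + 3))ᶜ).edgeFinset,
          1 - w (e.map φ) = if k ∈ e then (1 - pbar) else (1 - p) := by
        intro e _
        rw [hwe e, apply_ite (fun x : ℝ => 1 - x)]
      rw [Finset.prod_congr rfl this, prod_ite_mem_aux, hdegc, hcardc]
    rw [P1, P2]
    have hsplit1 : p ^ (n + 3) = p ^ 2 * p ^ (n + 1) := by
      rw [← pow_add, show 2 + (n + 1) = n + 3 by omega]
    have hsplit2 : (1 - p) ^ m = (1 - p) ^ n * (1 - p) ^ (m - n) := by
      rw [← pow_add, Nat.add_sub_cancel' hmn]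
    rw [hsplit1, hsplit2]
    calc pbar ^ 2 * p ^ (n + 1) * ((1 - pbar) ^ n * (1 - p) ^ (m - n))
        = (pbar ^ 2 * (1 - pbar) ^ n) * (p ^ (n + 1) * (1 - p) ^ (m - n)) := by ring
      _ = (p ^ 2 * (1 - p) ^ n) * (p ^ (n + 1) * (1 - p) ^ (m - n)) := by rw [key]
      _ = p ^ 2 * p ^ (n + 1) * ((1 - p) ^ n * (1 - p) ^ (m - n)) := by ring
  · push_neg at hvr
    have hwe : ∀ e : Sym2 (Fin (n + 3)), w (e.map φ) = p := by
      intro e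
      rw [hwdef, if_neg]
      intro hcon
      obtain ⟨a, _, hav⟩ := Sym2.mem_map.mp hcon
      exact hvr a hav
    have P1 : (∏ e ∈ (SimpleGraph.cycleGraph (n + 3)).edgeFinset, w (e.map φ))
        = p ^ (n + 3) := by
      rw [Finset.prod_congr rfl (fun e _ => hwe e), Finset.prod_const, hcard]
    have P2 : (∏ e ∈ ((SimpleGraph.cycleGraph (n + 3))ᶜ).edgeFinset, (1 - w (e.map φ)))
        = (1 - p) ^ m := by
      rw [Finset.prod_congr rfl (fun e _ => by rw [hwe e]), Finset.prod_const, hcardc]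
    rw [P1, P2]
end

section
/- For any γ > 0 and integer r ≥ 2, there exists N such that for all k ≥ N: if K is a graph on k vertices with at least (1-γ)·C(k,2) edges, then at least (1-γr²)·C(k,2) edges of K belong to a copy of the complete graph K_r in K. -/
/-!
An edge `e` of `K` that lies in no `r`-clique makes every `r`-set containing `e` a non-clique.
Double counting pairs (uncovered edge, non-clique `r`-set containing it) gives
`#uncovered * C(k-2, r-2) ≤ C(r,2) * #non-clique r-sets`, and every non-clique `r`-set contains
a non-edge, so `#non-clique r-sets ≤ #non-edges * C(k-2, r-2)`. Hence at most `C(r,2)` times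
as many edges as non-edges are uncovered (for `k ≥ r`, where `C(k-2, r-2) > 0` cancels). There
are at most `γ C(k,2)` non-edges, and `1 + C(r,2) ≤ r²`.
-/

open Finset

namespace SimpleGraph

variable {V : Type*} [Fintype V] [DecidableEq V] (G : SimpleGraph V) [DecidableRel G.Adj]

theorem card_edgeFinset_add_card_edgeFinset_compl :
    #G.edgeFinset + #Gᶜ.edgeFinset = (Fintype.card V).choose 2 := by
  rw [← card_union_of_disjoint (disjoint_edgeFinset.2 disjoint_compl_right), ← edgeFinset_sup]
  convert card_edgeFinset_top_eq_card_choose_two (V := V) using 3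
  exact sup_compl_eq_top

theorem card_filter_powersetCard_toFinset_subset {e : Sym2 V} (he : ¬e.IsDiag) {r : ℕ}
    (hr : 2 ≤ r) :
    #{s ∈ powersetCard r univ | e.toFinset ⊆ s} = (Fintype.card V - 2).choose (r - 2) := by
  have hcard := Sym2.card_toFinset_of_not_isDiag e he
  rw [card_filter_powersetCard_subset _ _ _ (subset_univ _) (hcard ▸ hr), card_univ, hcard]

theorem card_filter_not_isNClique_le {r : ℕ} (hr : 2 ≤ r) :
    #{s ∈ powersetCard r univ | ¬G.IsNClique r s} ≤
      #Gᶜ.edgeFinset * (Fintype.card V - 2).choose (r - 2) := by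
  have hcover : {s ∈ powersetCard r (univ : Finset V) | ¬G.IsNClique r s} ⊆
      Gᶜ.edgeFinset.biUnion fun f => {s ∈ powersetCard r univ | f.toFinset ⊆ s} := by
    intro s hs
    obtain ⟨hs, hnc⟩ := mem_filter.1 hs
    obtain ⟨x, hx, y, hy, hxy, hnadj⟩ : ∃ x ∈ s, ∃ y ∈ s, x ≠ y ∧ ¬G.Adj x y := by
      simpa [isNClique_iff, (mem_powersetCard.1 hs).2, isClique_iff, Set.Pairwise] using hnc
    refine mem_biUnion.2 ⟨s(x, y), ?_, mem_filter.2 ⟨hs, ?_⟩⟩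
    · simpa [compl_adj] using ⟨hxy, hnadj⟩
    · simpa [Sym2.toFinset_mk_eq, insert_subset_iff] using ⟨hx, hy⟩
  refine (card_le_card hcover).trans (card_biUnion_le_card_mul _ _ _ fun f hf => ?_)
  rw [card_filter_powersetCard_toFinset_subset (not_isDiag_of_mem_edgeFinset hf) hr]

theorem card_filter_not_exists_isNClique_mul_le {r : ℕ} (hr : 2 ≤ r) :
    #{e ∈ G.edgeFinset | ¬∃ s, G.IsNClique r s ∧ e.toFinset ⊆ s} *
        (Fintype.card V - 2).choose (r - 2) ≤
      #{s ∈ powersetCard r univ | ¬G.IsNClique r s} * r.choose 2 := by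
  refine card_mul_le_card_mul (fun e s => e.toFinset ⊆ s) (fun e he => ?_) (fun s hs => ?_)
  · obtain ⟨he, hunc⟩ := mem_filter.1 he
    rw [← card_filter_powersetCard_toFinset_subset (not_isDiag_of_mem_edgeFinset he) hr]
    refine card_le_card fun s hs => ?_
    obtain ⟨hs, hes⟩ := mem_filter.1 hs
    exact mem_filter.2 ⟨mem_filter.2 ⟨hs, fun hcl => hunc ⟨s, hcl, hes⟩⟩, hes⟩
  · have hcard : #s = r := (mem_powersetCard.1 (mem_filter.1 hs).1).2
    rw [← hcard, ← Sym2.card_image_offDiag]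
    refine card_le_card fun e he => ?_
    obtain ⟨he, hes⟩ := mem_filter.1 he
    induction e using Sym2.ind with
    | _ x y =>
      have hxy : x ≠ y := (mem_edgeSet G).1 (mem_edgeFinset.1 (mem_filter.1 he).1) |>.ne
      rw [Sym2.toFinset_mk_eq, insert_subset_iff, singleton_subset_iff] at hes
      exact mem_image.2 ⟨(x, y), mem_offDiag.2 ⟨hes.1, hes.2, hxy⟩, rfl⟩

theorem card_filter_not_exists_isNClique_le {r : ℕ} (hr : 2 ≤ r) (hrV : r ≤ Fintype.card V) :
    #{e ∈ G.edgeFinset | ¬∃ s, G.IsNClique r s ∧ e.toFinset ⊆ s} ≤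
      r.choose 2 * #Gᶜ.edgeFinset := by
  have hpos : 0 < (Fintype.card V - 2).choose (r - 2) := Nat.choose_pos (by omega)
  refine Nat.le_of_mul_le_mul_right ?_ hpos
  calc _ ≤ #{s ∈ powersetCard r univ | ¬G.IsNClique r s} * r.choose 2 :=
        G.card_filter_not_exists_isNClique_mul_le hr
    _ ≤ #Gᶜ.edgeFinset * (Fintype.card V - 2).choose (r - 2) * r.choose 2 :=
        Nat.mul_le_mul_right _ (G.card_filter_not_isNClique_le hr)
    _ = _ := by ring

end SimpleGraph

open SimpleGraph in
theorem edges_covered_by_cliques_general (γ : ℝ) (r : ℕ) (hr : 2 ≤ r) :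
    ∃ N : ℕ, ∀ k : ℕ, N ≤ k → ∀ (K : SimpleGraph (Fin k)),
      (1 - γ) * (k.choose 2 : ℝ) ≤ K.edgeSet.ncard →
      (1 - γ * r ^ 2) * (k.choose 2 : ℝ) ≤
        ({e ∈ K.edgeSet | ∃ s : Finset (Fin k), s.card = r ∧ K.IsClique ↑s ∧
          ∀ v ∈ e, v ∈ s}.ncard : ℝ) := by
  classical
  refine ⟨r, fun k hk K hK => ?_⟩
  have hcovered : {e ∈ K.edgeSet | ∃ s : Finset (Fin k), s.card = r ∧ K.IsClique ↑s ∧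
      ∀ v ∈ e, v ∈ s} = ↑{e ∈ K.edgeFinset | ∃ s, K.IsNClique r s ∧ e.toFinset ⊆ s} := by
    ext e
    simp only [Set.mem_ofPred_eq, coe_filter, mem_edgeFinset, isNClique_iff, subset_iff,
      Sym2.mem_toFinset]
    exact and_congr_right fun _ => exists_congr fun s => by tauto
  have hedges : K.edgeSet.ncard = #K.edgeFinset := by
    rw [← coe_edgeFinset, Set.ncard_coe_finset]
  have hsplit := card_filter_add_card_filter_not (s := K.edgeFinset)
    (fun e => ∃ s, K.IsNClique r s ∧ e.toFinset ⊆ s)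
  have hcompl := K.card_edgeFinset_add_card_edgeFinset_compl
  have huncovered := K.card_filter_not_exists_isNClique_le hr (by simpa using hk)
  have hchoose : (r.choose 2 : ℝ) + 1 ≤ r ^ 2 := by
    have hr' : (2 : ℝ) ≤ r := by exact_mod_cast hr
    rw [Nat.cast_choose_two]
    nlinarith
  rw [hedges] at hK
  rw [Fintype.card_fin] at hcompl
  rw [hcovered, Set.ncard_coe_finset]
  rify at hsplit hcompl huncovered
  have hmissing : (#Kᶜ.edgeFinset : ℝ) ≤ γ * k.choose 2 := by linarith
  nlinarith [mul_le_mul_of_nonneg_left hmissing (sq_nonneg (r : ℝ)),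
    mul_nonneg (sub_nonneg.2 hchoose) (Nat.cast_nonneg (α := ℝ) #Kᶜ.edgeFinset)]

theorem edges_covered_by_cliques (γ : ℝ) (hγ : 0 < γ) (r : ℕ) (hr : 2 ≤ r) :
    ∃ N : ℕ, ∀ k : ℕ, N ≤ k → ∀ (K : SimpleGraph (Fin k)),
      (1 - γ) * (k.choose 2 : ℝ) ≤ K.edgeSet.ncard →
      (1 - γ * r ^ 2) * (k.choose 2 : ℝ) ≤
        ({e ∈ K.edgeSet | ∃ s : Finset (Fin k), s.card = r ∧ K.IsClique ↑s ∧
          ∀ v ∈ e, v ∈ s}.ncard : ℝ) :=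
  edges_covered_by_cliques_general γ r hr
end

section
/- For every ε > 0 there exist r₀ = O(1/ε³) such that for every even r ≥ r₀ there are N and γ > 0 with: if K is a graph on k ≥ N vertices with at least (1-γ)·C(k,2) edges whose edges are 2-colored red/blue with at least ε·C(k,2) edges of each color, then K contains r vertices spanning a complete graph K_r having at least r blue edges and at least r red edges. -/
/-!
Write `n` for the number of vertices. Call a vertex clean if it has at most `b ≈ ε³n/(64r)`
non-neighbours in `K`; as `K` misses at most `γ·C(n,2)` pairs, at most `ε³n/256` vertices are
not clean. For a colour class with at least `ε·C(n,2)` edges, power means give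
`∑ deg³ ≥ (2e)³/n² ≥ ε³n⁴/8`, and `∑ deg³` counts ordered triples together with their common
neighbours. The triples that are not triangles of `K` on clean vertices are too few to account
for this sum, so some clean triangle has at least `r(b + 1)` clean common neighbours in that
colour. Take a red such triangle, then a blue one among the clean common `K`-neighbours of the
red one, giving a 6-clique. Greedily add `t` clean common red neighbours of the red triangle and
then `t` clean common blue neighbours of the blue triangle, each time a vertex adjacent to all
chosen ones: a clean vertex excludes at most `b + 1` candidates. For `r = 2t + 6` the clique has
at least `3t ≥ r` edges of each colour.
-/

open Finset

section Counting

variable {V : Type*} [Fintype V]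

theorem card_filter_prod_eq_sum {β : Type*} [Fintype β] (Q : V → β → Prop)
    [∀ a, DecidablePred (Q a)] :
    #{p : V × β | Q p.1 p.2} = ∑ a, #{b | Q a b} := by
  simp only [card_filter, Fintype.sum_prod_type]

theorem card_filter_not_triangle_le (P : V → V → Prop) [DecidableRel P] :
    #{t : V × V × V | ¬(P t.1 t.2.1 ∧ P t.1 t.2.2 ∧ P t.2.1 t.2.2)} ≤
      3 * (Fintype.card V * #{p : V × V | ¬P p.1 p.2}) := by
  classical
  set n := Fintype.card V
  have hpairs : #{p : V × V | ¬P p.1 p.2} = ∑ a, #{b | ¬P a b} :=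
    card_filter_prod_eq_sum fun a b => ¬P a b
  have h₁ : #{t : V × V × V | ¬P t.1 t.2.1} = n * #{p : V × V | ¬P p.1 p.2} := by
    rw [card_filter_prod_eq_sum fun a (p : V × V) => ¬P a p.1, hpairs, mul_sum]
    refine sum_congr rfl fun a _ => ?_
    rw [show univ.filter (fun p : V × V => ¬P a p.1) = univ.filter (¬P a ·) ×ˢ univ by
      ext; simp, card_product, card_univ, mul_comm]
  have h₂ : #{t : V × V × V | ¬P t.1 t.2.2} = n * #{p : V × V | ¬P p.1 p.2} := by
    rw [card_filter_prod_eq_sum fun a (p : V × V) => ¬P a p.2, hpairs, mul_sum]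
    refine sum_congr rfl fun a _ => ?_
    rw [show univ.filter (fun p : V × V => ¬P a p.2) = univ ×ˢ univ.filter (¬P a ·) by
      ext; simp, card_product, card_univ]
  have h₃ : #{t : V × V × V | ¬P t.2.1 t.2.2} = n * #{p : V × V | ¬P p.1 p.2} := by
    rw [card_filter_prod_eq_sum fun _ (p : V × V) => ¬P p.1 p.2, sum_const, card_univ,
      smul_eq_mul]
  calc _ ≤ #(univ.filter (fun t : V × V × V => ¬P t.1 t.2.1) ∪
        univ.filter (fun t : V × V × V => ¬P t.1 t.2.2) ∪
        univ.filter (fun t : V × V × V => ¬P t.2.1 t.2.2)) :=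
        card_le_card fun t ht => by simp only [mem_filter, mem_union] at ht ⊢; tauto
    _ ≤ #{t : V × V × V | ¬P t.1 t.2.1} + #{t : V × V × V | ¬P t.1 t.2.2} +
        #{t : V × V × V | ¬P t.2.1 t.2.2} :=
        (card_union_le _ _).trans (Nat.add_le_add_right (card_union_le _ _) _)
    _ = _ := by rw [h₁, h₂, h₃]; ring

end Counting

/-- The parameter arithmetic: `b + 1 ≈ ε³n/(64r)` forces `d ≤ ε³n/256`, and then the left side
is below `ε³n⁶/8 ≤ (2E)³`. -/
theorem lt_two_mul_pow_three_of_density {ε n r m d E : ℝ} {b : ℕ} (hε : 0 < ε) (hr : 0 < r)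
    (hm : m ≤ 2 * r) (hn : 2 ≤ n) (hx : 1 ≤ ε ^ 3 * n / (64 * r))
    (hb : b = ⌊ε ^ 3 * n / (64 * r)⌋₊) (hd₀ : 0 ≤ d)
    (hd : d * (b + 1) ≤ ε ^ 6 / (2 ^ 14 * r) * (n * (n - 1)))
    (hE : ε * (n * (n - 1) / 2) ≤ E) :
    (m * (b + 1) + 7 * d) * n ^ 5 < (2 * E) ^ 3 := by
  set x := ε ^ 3 * n / (64 * r) with hxdef
  have hb₁ : x < b + 1 := hb ▸ Nat.lt_floor_add_one x
  have hb₂ : (b : ℝ) ≤ x := hb ▸ Nat.floor_le (by linarith)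
  have hrb : m * (b + 1) ≤ ε ^ 3 * n / 16 := by
    have hxr : x * (64 * r) = ε ^ 3 * n := by rw [hxdef]; field_simp
    nlinarith
  have hn₂ : n ^ 2 / 2 ≤ n * (n - 1) := by nlinarith
  have hd' : d ≤ ε ^ 3 * n / 256 := by
    have hγ : ε ^ 6 / (2 ^ 14 * r) * n ^ 2 = x * (ε ^ 3 * n / 256) := by
      rw [hxdef]; field_simp; ring
    have hdx : x * d ≤ x * (ε ^ 3 * n / 256) := calc
      x * d ≤ d * (b + 1) := by rw [mul_comm]; gcongr
      _ ≤ ε ^ 6 / (2 ^ 14 * r) * (n * (n - 1)) := hd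
      _ ≤ ε ^ 6 / (2 ^ 14 * r) * n ^ 2 := by gcongr; nlinarith
      _ = x * (ε ^ 3 * n / 256) := hγ
    exact le_of_mul_le_mul_left hdx (by linarith)
  have hE' : ε * n ^ 2 / 2 ≤ 2 * E := by nlinarith
  calc (m * (b + 1) + 7 * d) * n ^ 5
      ≤ (ε ^ 3 * n / 16 + 7 * (ε ^ 3 * n / 256)) * n ^ 5 := by gcongr
    _ < (ε * n ^ 2 / 2) ^ 3 := by
        have : 0 < ε ^ 3 * n ^ 6 := by positivity
        nlinarith
    _ ≤ (2 * E) ^ 3 := by gcongr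

namespace SimpleGraph

variable {V : Type*}

theorem edgeSet_fromEdgeSet_of_subset {G : SimpleGraph V} {s : Set (Sym2 V)}
    (hs : s ⊆ G.edgeSet) : (fromEdgeSet s).edgeSet = s := by
  rw [edgeSet_fromEdgeSet]
  exact sdiff_eq_self_iff_disjoint.2
    (Set.disjoint_right.2 fun e he => G.not_isDiag_of_mem_edgeSet (hs he))

variable [Fintype V]

section Degrees

variable (G : SimpleGraph V) [DecidableRel G.Adj]

theorem two_mul_card_edgeFinset_pow_three_le :
    (2 * #G.edgeFinset) ^ 3 ≤ Fintype.card V ^ 2 * ∑ v, G.degree v ^ 3 := by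
  rw [← sum_degrees_eq_twice_card_edges, ← card_univ]
  exact pow_sum_le_card_mul_sum_pow (fun _ _ => Nat.zero_le _) 2

theorem card_filter_lt_degree_mul_le {b : ℕ} :
    #{v | b < G.degree v} * (b + 1) ≤ 2 * #G.edgeFinset := by
  rw [← sum_degrees_eq_twice_card_edges, ← smul_eq_mul]
  exact (card_nsmul_le_sum _ _ _ fun v hv => (mem_filter.1 hv).2).trans
    (sum_le_sum_of_subset (subset_univ _))

end Degrees

variable [DecidableEq V]

variable (G : SimpleGraph V) [DecidableRel G.Adj]

theorem card_edgeFinset_compl_add_card_edgeFinset :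
    #Gᶜ.edgeFinset + #G.edgeFinset = (Fintype.card V).choose 2 := by
  rw [← card_edgeFinset_top_eq_card_choose_two, add_comm, ← card_union_of_disjoint
    (disjoint_edgeFinset.2 disjoint_compl_right), ← edgeFinset_sup]
  congr 1
  ext ⟨x, y⟩
  simp only [edgeFinset, sup_compl_eq_top]

def commonNeighborFinset (s : Finset V) : Finset V := {v | ∀ u ∈ s, G.Adj u v}

theorem sum_degree_pow_three :
    ∑ v, G.degree v ^ 3 = ∑ t : V × V × V, #(G.commonNeighborFinset {t.1, t.2.1, t.2.2}) := by
  have hcube : ∀ v, G.degree v ^ 3 =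
      #{t : V × V × V | G.Adj v t.1 ∧ G.Adj v t.2.1 ∧ G.Adj v t.2.2} := by
    intro v
    rw [← card_neighborFinset_eq_degree, pow_three, ← card_product, ← card_product]
    congr 1
    ext t
    simp
  simp only [hcube, card_filter]
  rw [sum_comm]
  refine sum_congr rfl fun t _ => ?_
  rw [← card_filter]
  congr 1
  ext v
  simp [commonNeighborFinset, adj_comm]

variable {G}

@[simp]
theorem mem_commonNeighborFinset {s : Finset V} {v : V} :
    v ∈ G.commonNeighborFinset s ↔ ∀ u ∈ s, G.Adj u v := by
  simp [commonNeighborFinset]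

theorem notMem_of_mem_commonNeighborFinset {s : Finset V} {v : V}
    (hv : v ∈ G.commonNeighborFinset s) : v ∉ s :=
  fun hvs => G.irrefl (mem_commonNeighborFinset.1 hv v hvs)

theorem card_compl_commonNeighborFinset_le {s : Finset V} {b : ℕ}
    (hs : ∀ u ∈ s, Gᶜ.degree u ≤ b) : #(G.commonNeighborFinset s)ᶜ ≤ #s * (b + 1) := by
  have hsub : (G.commonNeighborFinset s)ᶜ ⊆
      s.biUnion fun u => insert u (Gᶜ.neighborFinset u) := by
    intro v hv
    simp only [mem_compl, mem_commonNeighborFinset, not_forall] at hv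
    obtain ⟨u, hu, huv⟩ := hv
    refine mem_biUnion.2 ⟨u, hu, ?_⟩
    by_cases h : u = v
    · simp [h]
    · simp [h, huv]
  calc #(G.commonNeighborFinset s)ᶜ
      ≤ ∑ u ∈ s, #(insert u (Gᶜ.neighborFinset u)) :=
        (card_le_card hsub).trans card_biUnion_le
    _ ≤ ∑ _u ∈ s, (b + 1) := sum_le_sum fun u hu => (card_insert_le _ _).trans
        (Nat.succ_le_succ (hs u hu))
    _ = #s * (b + 1) := by rw [sum_const, smul_eq_mul]

theorem IsClique.union_of_subset_commonNeighborFinset {s t : Finset V} (hs : G.IsClique s)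
    (ht : G.IsClique t) (hts : t ⊆ G.commonNeighborFinset s) : G.IsClique ↑(s ∪ t) := by
  rw [coe_union, IsClique, Set.pairwise_union]
  refine ⟨hs, ht, fun u hu v hv _ => ?_⟩
  have huv := mem_commonNeighborFinset.1 (hts hv) u hu
  exact ⟨huv, huv.symm⟩

theorem exists_isClique_extend {b : ℕ} {P : Finset V} (hPb : ∀ v ∈ P, Gᶜ.degree v ≤ b)
    (m : ℕ) : ∀ s : Finset V, G.IsClique ↑s → (∀ u ∈ s, Gᶜ.degree u ≤ b) →
      (#s + m) * (b + 1) ≤ #P →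
      ∃ s', s ⊆ s' ∧ s' \ s ⊆ P ∧ #s' = #s + m ∧ G.IsClique ↑s' := by
  induction m with
  | zero => exact fun s hs _ _ => ⟨s, subset_rfl, by simp, rfl, hs⟩
  | succ m ih =>
    intro s hs hsb hm
    have hlt : #(G.commonNeighborFinset s)ᶜ < #P :=
      (card_compl_commonNeighborFinset_le hsb).trans_lt (by nlinarith)
    obtain ⟨v, hvP, hv⟩ := exists_mem_notMem_of_card_lt_card hlt
    rw [mem_compl, not_not] at hv
    have hvs := notMem_of_mem_commonNeighborFinset hv
    have hvclique : G.IsClique ↑(insert v s) := by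
      rw [coe_insert, isClique_insert]
      exact ⟨hs, fun u hu _ => (mem_commonNeighborFinset.1 hv u hu).symm⟩
    obtain ⟨s', hss', hs'P, hcard, hclique⟩ := ih (insert v s) hvclique
      (by simpa [hPb v hvP] using hsb) (by rw [card_insert_of_notMem hvs]; linarith)
    refine ⟨s', (subset_insert v s).trans hss', fun x hx => ?_, by
      rw [hcard, card_insert_of_notMem hvs]; ring, hclique⟩
    rw [mem_sdiff] at hx
    by_cases hxv : x = v
    · exact hxv ▸ hvP
    · exact hs'P (mem_sdiff.2 ⟨hx.1, by simp [hxv, hx.2]⟩)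

theorem card_mul_card_le_ncard_edgeSet_within {A U s : Finset V} (hA : A ⊆ s) (hU : U ⊆ s)
    (hUA : U ⊆ G.commonNeighborFinset A) :
    #A * #U ≤ {e ∈ G.edgeSet | ∀ v ∈ e, v ∈ s}.ncard := by
  have hinj : Set.InjOn (fun p : V × V => s(p.1, p.2)) ↑(A ×ˢ U) := by
    rintro ⟨a, u⟩ hau ⟨a', u'⟩ hau' heq
    simp only [coe_product, Set.mem_prod, mem_coe] at hau hau'
    rcases Sym2.eq_iff.1 heq with ⟨rfl, rfl⟩ | ⟨rfl, rfl⟩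
    · rfl
    · exact absurd hau.1 (notMem_of_mem_commonNeighborFinset (hUA hau'.2))
  have hsub : ↑((A ×ˢ U).image fun p : V × V => s(p.1, p.2)) ⊆
      {e ∈ G.edgeSet | ∀ v ∈ e, v ∈ s} := by
    intro e he
    simp only [coe_image, coe_product, Set.mem_image, Set.mem_prod, mem_coe] at he
    obtain ⟨⟨a, u⟩, ⟨ha, hu⟩, rfl⟩ := he
    refine ⟨mem_commonNeighborFinset.1 (hUA hu) a ha, fun v hv => ?_⟩
    rcases Sym2.mem_iff.1 hv with rfl | rfl
    exacts [hA ha, hU hu]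
  calc #A * #U = #((A ×ˢ U).image fun p : V × V => s(p.1, p.2)) := by
        rw [card_image_of_injOn hinj, card_product]
    _ ≤ _ := by rw [← Set.ncard_coe_finset]; exact Set.ncard_le_ncard hsub (Set.toFinite _)

theorem card_filter_not_adj_outside_le {F : Finset V} {b : ℕ}
    (hF : ∀ v ∉ F, Gᶜ.degree v ≤ b) :
    #{p : V × V | ¬(p.1 ∉ F ∧ p.2 ∉ F ∧ G.Adj p.1 p.2)} ≤
      Fintype.card V * (b + 1 + 2 * #F) := by
  rw [card_filter_prod_eq_sum fun x y => ¬(x ∉ F ∧ y ∉ F ∧ G.Adj x y)]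
  have hrow : ∀ a, #{y | ¬(a ∉ F ∧ y ∉ F ∧ G.Adj a y)} ≤
      (if a ∈ F then Fintype.card V else 0) + (#F + (b + 1)) := by
    intro a
    by_cases ha : a ∈ F
    · simp [ha]
    · have hsub : univ.filter (fun y => ¬(a ∉ F ∧ y ∉ F ∧ G.Adj a y)) ⊆
          F ∪ insert a (Gᶜ.neighborFinset a) := by
        intro y hy
        simp only [mem_filter, mem_univ, true_and, mem_union, mem_insert, mem_neighborFinset,
          compl_adj] at hy ⊢
        tauto
      rw [if_neg ha, zero_add]
      exact (card_le_card hsub).trans ((card_union_le _ _).trans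
        (Nat.add_le_add_left ((card_insert_le _ _).trans (Nat.succ_le_succ (hF a ha))) _))
  calc _ ≤ ∑ a, ((if a ∈ F then Fintype.card V else 0) + (#F + (b + 1))) :=
        sum_le_sum fun a _ => hrow a
    _ = _ := by
      rw [sum_add_distrib, ← sum_filter, sum_const, sum_const, filter_mem_eq_inter, univ_inter,
        card_univ, smul_eq_mul, smul_eq_mul]
      ring

theorem exists_isNClique_three_many_common_neighbors (H : SimpleGraph V) [DecidableRel H.Adj]
    {F : Finset V} {b q : ℕ} (hF : ∀ v ∉ F, Gᶜ.degree v ≤ b)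
    (h : (q + 3 * (b + 1 + 2 * #F)) * Fintype.card V ^ 5 < (2 * #H.edgeFinset) ^ 3) :
    ∃ A : Finset V, G.IsNClique 3 ↑A ∧ Disjoint A F ∧
      q ≤ #(H.commonNeighborFinset A) := by
  by_contra! hcon
  set n := Fintype.card V
  set P : V → V → Prop := fun x y => x ∉ F ∧ y ∉ F ∧ G.Adj x y
  set good : V × V × V → Prop := fun t => P t.1 t.2.1 ∧ P t.1 t.2.2 ∧ P t.2.1 t.2.2
  set codeg : V × V × V → ℕ := fun t => #(H.commonNeighborFinset {t.1, t.2.1, t.2.2})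
  have hgood : ∀ t ∈ ({t | good t} : Finset _), codeg t ≤ q := by
    rintro ⟨x, y, z⟩ ht
    simp only [mem_filter, mem_univ, true_and, good, P] at ht
    refine (hcon _ (is3Clique_triple_iff.2 ⟨ht.1.2.2, ht.2.1.2.2, ht.2.2.2.2⟩) ?_).le
    simp [ht.1.1, ht.1.2.1, ht.2.1.2.1]
  have hbad : #{t | ¬good t} ≤ 3 * (n * (n * (b + 1 + 2 * #F))) :=
    (card_filter_not_triangle_le P).trans (by gcongr; exact card_filter_not_adj_outside_le hF)
  have hsum : ∑ t, codeg t ≤ q * n ^ 3 + n * #{t | ¬good t} := by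
    rw [← sum_filter_add_sum_filter_not univ good]
    gcongr
    · calc _ ≤ #{t | good t} * q := sum_le_card_nsmul _ _ _ hgood
        _ ≤ n ^ 3 * q := by gcongr; exact (card_le_univ _).trans (by simp [n, pow_three])
        _ = q * n ^ 3 := mul_comm _ _
    · calc _ ≤ #{t | ¬good t} * n := sum_le_card_nsmul _ _ _ fun t _ => card_le_univ _
        _ = n * #{t | ¬good t} := mul_comm _ _
  have hle : (2 * #H.edgeFinset) ^ 3 ≤ (q + 3 * (b + 1 + 2 * #F)) * n ^ 5 := calc
    _ ≤ n ^ 2 * ∑ v, H.degree v ^ 3 := H.two_mul_card_edgeFinset_pow_three_le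
    _ = n ^ 2 * ∑ t, codeg t := by rw [sum_degree_pow_three]
    _ ≤ n ^ 2 * (q * n ^ 3 + n * (3 * (n * (n * (b + 1 + 2 * #F))))) := by
        gcongr; exact hsum.trans (by gcongr)
    _ = (q + 3 * (b + 1 + 2 * #F)) * n ^ 5 := by ring
  exact h.not_ge hle

theorem exists_isClique_extend_within_commonNeighborFinset (H : SimpleGraph V) [DecidableRel H.Adj]
    {A s : Finset V} {b m : ℕ} (hs : G.IsClique ↑s) (hsb : ∀ u ∈ s, Gᶜ.degree u ≤ b)
    (hA : A ⊆ s)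
    (h : (#s + m) * (b + 1) + #{v | b < Gᶜ.degree v} ≤ #(H.commonNeighborFinset A)) :
    ∃ s', s ⊆ s' ∧ #s' = #s + m ∧ G.IsClique ↑s' ∧
      (∀ u ∈ s', Gᶜ.degree u ≤ b) ∧
      #A * m ≤ {e ∈ H.edgeSet | ∀ v ∈ e, v ∈ s'}.ncard := by
  have hP : (#s + m) * (b + 1) ≤ #{v ∈ H.commonNeighborFinset A | Gᶜ.degree v ≤ b} := by
    have hsplit := card_filter_add_card_filter_not
      (s := H.commonNeighborFinset A) (fun v => Gᶜ.degree v ≤ b)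
    have hbad :
        #{v ∈ H.commonNeighborFinset A | ¬Gᶜ.degree v ≤ b} ≤ #{v | b < Gᶜ.degree v} :=
      card_le_card fun v hv => by simp_all
    omega
  obtain ⟨s', hss', hs'P, hcard, hclique⟩ :=
    exists_isClique_extend (fun v hv => (mem_filter.1 hv).2) m s hs hsb hP
  refine ⟨s', hss', hcard, hclique, fun u hu => ?_, ?_⟩
  · by_cases hus : u ∈ s
    exacts [hsb u hus, (mem_filter.1 (hs'P (mem_sdiff.2 ⟨hu, hus⟩))).2]
  · have hU : #(s' \ s) = m := by rw [card_sdiff_of_subset hss', hcard]; omega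
    calc #A * m = #A * #(s' \ s) := by rw [hU]
      _ ≤ _ := card_mul_card_le_ncard_edgeSet_within (hA.trans hss') sdiff_subset
          (hs'P.trans (filter_subset _ _))

theorem exists_two_triangles_many_common_neighbors (R B : SimpleGraph V) [DecidableRel R.Adj]
    [DecidableRel B.Adj] {b q : ℕ}
    (hR : (q + 3 * (7 * (b + 1) + 2 * #{v | b < Gᶜ.degree v})) * Fintype.card V ^ 5 <
      (2 * #R.edgeFinset) ^ 3)
    (hB : (q + 3 * (7 * (b + 1) + 2 * #{v | b < Gᶜ.degree v})) * Fintype.card V ^ 5 <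
      (2 * #B.edgeFinset) ^ 3) :
    ∃ A A' : Finset V, #A = 3 ∧ #A' = 3 ∧ Disjoint A A' ∧ G.IsClique ↑(A ∪ A') ∧
      (∀ u ∈ A ∪ A', Gᶜ.degree u ≤ b) ∧
      q ≤ #(R.commonNeighborFinset A) ∧ q ≤ #(B.commonNeighborFinset A') := by
  set D : Finset V := {v | b < Gᶜ.degree v}
  have hD : ∀ v ∉ D, Gᶜ.degree v ≤ b := by simp [D]
  obtain ⟨A, hA, hAD, hAq⟩ := exists_isNClique_three_many_common_neighbors R (q := q) hD
    (hR.trans_le' (Nat.mul_le_mul_right _ (by omega)))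
  -- The second triangle avoids the non-neighbours of the first, so together they form a clique.
  set F := D ∪ (G.commonNeighborFinset A)ᶜ
  have hF : ∀ v ∉ F, Gᶜ.degree v ≤ b := fun v hv => hD v fun h => hv (mem_union_left _ h)
  have hFcard : #F ≤ #D + 3 * (b + 1) := by
    refine (card_union_le _ _).trans (Nat.add_le_add_left ?_ _)
    rw [← hA.card_eq]
    exact card_compl_commonNeighborFinset_le fun u hu => hD u (Finset.disjoint_left.1 hAD hu)
  obtain ⟨A', hA', hA'F, hA'q⟩ := exists_isNClique_three_many_common_neighbors B (q := q) hF
    (hB.trans_le' (Nat.mul_le_mul_right _ (by omega)))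
  have hA'A : A' ⊆ G.commonNeighborFinset A := fun v hv =>
    notMem_compl.1 (not_or.1 (mem_union.not.1 (Finset.disjoint_left.1 hA'F hv))).2
  refine ⟨A, A', hA.card_eq, hA'.card_eq, ?_,
    hA.isClique.union_of_subset_commonNeighborFinset hA'.isClique hA'A,
    fun u hu => (mem_union.1 hu).elim (fun hu => hD u (Finset.disjoint_left.1 hAD hu))
      (fun hu => hF u (Finset.disjoint_left.1 hA'F hu)), hAq, hA'q⟩
  exact Finset.disjoint_left.2 fun v hvA hvA' => notMem_of_mem_commonNeighborFinset (hA'A hvA') hvA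

theorem exists_isClique_with_many_edges_of_both (R B : SimpleGraph V) [DecidableRel R.Adj]
    [DecidableRel B.Adj] {b t : ℕ}
    (hR : ((2 * t + 27) * (b + 1) + 7 * #{v | b < Gᶜ.degree v}) * Fintype.card V ^ 5 <
      (2 * #R.edgeFinset) ^ 3)
    (hB : ((2 * t + 27) * (b + 1) + 7 * #{v | b < Gᶜ.degree v}) * Fintype.card V ^ 5 <
      (2 * #B.edgeFinset) ^ 3) :
    ∃ s : Finset V, #s = 2 * t + 6 ∧ G.IsClique ↑s ∧
      3 * t ≤ {e ∈ R.edgeSet | ∀ v ∈ e, v ∈ s}.ncard ∧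
      3 * t ≤ {e ∈ B.edgeSet | ∀ v ∈ e, v ∈ s}.ncard := by
  set D : Finset V := {v | b < Gᶜ.degree v}
  have hq : (2 * t + 6) * (b + 1) + #D + 3 * (7 * (b + 1) + 2 * #D) =
      (2 * t + 27) * (b + 1) + 7 * #D := by ring
  obtain ⟨A, A', hA, hA', hAA', hclique₀, hclean₀, hAq, hA'q⟩ :=
    exists_two_triangles_many_common_neighbors R B (q := (2 * t + 6) * (b + 1) + #D)
      (hq ▸ hR) (hq ▸ hB)
  have hcard₀ : #(A ∪ A') = 6 := by rw [card_union_of_disjoint hAA', hA, hA']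
  have hpool : ∀ m ≤ 2 * t + 6, m * (b + 1) + #D ≤ (2 * t + 6) * (b + 1) + #D :=
    fun m hm => Nat.add_le_add_right (Nat.mul_le_mul_right _ hm) _
  obtain ⟨s₁, hs₀₁, hcard₁, hclique₁, hclean₁, hred⟩ :=
    exists_isClique_extend_within_commonNeighborFinset R (m := t) hclique₀ hclean₀
      subset_union_left ((hpool _ (by omega)).trans hAq)
  obtain ⟨s₂, hs₁₂, hcard₂, hclique₂, -, hblue⟩ :=
    exists_isClique_extend_within_commonNeighborFinset B (m := t) hclique₁ hclean₁
      (subset_union_right.trans hs₀₁) ((hpool _ (by omega)).trans hA'q)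
  rw [hA] at hred
  rw [hA'] at hblue
  refine ⟨s₂, by omega, hclique₂, hred.trans (Set.ncard_le_ncard ?_), hblue⟩
  exact fun e he => ⟨he.1, fun v hv => hs₁₂ (he.2 v hv)⟩

theorem lt_two_mul_card_edgeFinset_pow_three (H : SimpleGraph V) [DecidableRel H.Adj] {ε : ℝ}
    {r m b : ℕ} (hε : 0 < ε) (hr : 0 < r) (hm : m ≤ 2 * r) (hn : 2 ≤ Fintype.card V)
    (hx : 1 ≤ ε ^ 3 * Fintype.card V / (64 * r))
    (hb : b = ⌊ε ^ 3 * Fintype.card V / (64 * r)⌋₊)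
    (hG : (1 - ε ^ 6 / (2 ^ 14 * r)) * ((Fintype.card V).choose 2 : ℝ) ≤ G.edgeSet.ncard)
    (hH : ε * ((Fintype.card V).choose 2 : ℝ) ≤ H.edgeSet.ncard) :
    (m * (b + 1) + 7 * #{v | b < Gᶜ.degree v}) * Fintype.card V ^ 5 <
      (2 * #H.edgeFinset) ^ 3 := by
  have hdirty := Gᶜ.card_filter_lt_degree_mul_le (b := b)
  have hcompl := G.card_edgeFinset_compl_add_card_edgeFinset
  rw [← Nat.cast_le (α := ℝ)] at hdirty
  rw [← Nat.cast_inj (R := ℝ)] at hcompl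
  push_cast at hdirty hcompl
  rw [← coe_edgeFinset, Set.ncard_coe_finset] at hG hH
  rw [Nat.cast_choose_two] at hG hH hcompl
  exact_mod_cast lt_two_mul_pow_three_of_density (m := m) (d := #{v | b < Gᶜ.degree v}) hε
    (by exact_mod_cast hr) (by exact_mod_cast hm) (by exact_mod_cast hn) hx hb (Nat.cast_nonneg _)
    (by nlinarith) hH

end SimpleGraph

theorem clique_with_both_colors (ε : ℝ) (hε : 0 < ε) :
    ∃ r₀ : ℕ, ∀ r : ℕ, r₀ ≤ r → Even r →
      ∃ (N : ℕ) (γ : ℝ), 0 < γ ∧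
        ∀ k : ℕ, N ≤ k → ∀ (K : SimpleGraph (Fin k)) (R : Set (Sym2 (Fin k))),
          R ⊆ K.edgeSet →
          (1 - γ) * (k.choose 2 : ℝ) ≤ K.edgeSet.ncard →
          ε * (k.choose 2 : ℝ) ≤ R.ncard →
          ε * (k.choose 2 : ℝ) ≤ (K.edgeSet \ R).ncard →
          ∃ s : Finset (Fin k), s.card = r ∧ K.IsClique ↑s ∧
            r ≤ {e ∈ R | ∀ v ∈ e, v ∈ s}.ncard ∧
            r ≤ {e ∈ K.edgeSet \ R | ∀ v ∈ e, v ∈ s}.ncard := by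
  classical
  refine ⟨21, fun r hr hr_even => ⟨max 2 ⌈64 * r / ε ^ 3⌉₊, ε ^ 6 / (2 ^ 14 * r),
    by positivity, fun k hk K R hRK hK hRε hBε => ?_⟩⟩
  obtain ⟨t, rfl⟩ : ∃ t, r = 2 * t + 6 :=
    ⟨r / 2 - 3, by obtain ⟨m, rfl⟩ := hr_even; omega⟩
  have hn : 2 ≤ Fintype.card (Fin k) := by rw [Fintype.card_fin]; omega
  have hx : 1 ≤ ε ^ 3 * Fintype.card (Fin k) / (64 * ↑(2 * t + 6)) := by
    rw [Fintype.card_fin, le_div_iff₀ (by positivity), one_mul,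
      ← div_le_iff₀' (by positivity)]
    exact (Nat.le_ceil _).trans (by exact_mod_cast le_of_max_le_right hk)
  have hdense := fun (H : SimpleGraph (Fin k)) [DecidableRel H.Adj]
      (hH : ε * (k.choose 2 : ℝ) ≤ H.edgeSet.ncard) =>
    K.lt_two_mul_card_edgeFinset_pow_three H (m := 2 * t + 27) hε (by omega) (by omega) hn hx rfl
      (by rwa [Fintype.card_fin]) (by rwa [Fintype.card_fin])
  have hred := SimpleGraph.edgeSet_fromEdgeSet_of_subset hRK
  have hblue := SimpleGraph.edgeSet_fromEdgeSet_of_subset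
    (Set.sdiff_subset (s := K.edgeSet) (t := R))
  obtain ⟨s, hs, hclique, hs_red, hs_blue⟩ := K.exists_isClique_with_many_edges_of_both _ _
    (hdense _ (by rwa [hred])) (hdense _ (by rwa [hblue]))
  rw [hred] at hs_red
  rw [hblue] at hs_blue
  exact ⟨s, hs, hclique, by omega, by omega⟩
end
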